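/- arXiv:2504.02021 — 9 statements merged into one kernel-verified Lean document; each statement's English description precedes it below -/
import Mathlib

section
/- Let p, q̃, c be positive integers with p ≥ 2, q := q̃·c, and q ≥ 3. Then the greatest power of p that is less than or equal to (q−2)! / (c!^{q̃−2} · (c−1)!^2) is at least (1/p) · (1/q̃²) · (1/(e·c))^{q̃} · q̃^{q}. -/
/-!
Since `c! = c · (c-1)!`, the quotient equals `(q-2)! · c² / c!^q̃`. The Stirling-type bounds
`c! ≤ e · c · (c/e)^c` and `(q/e)^q ≤ q! ≤ q² · (q-2)!` show that it is at least
`q̃^q / (q̃² (e c)^q̃)` when `q̃ ≥ 2`, and the greatest power of `p` below it exceeds it divided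
by `p`. For `q̃ = 1` the claimed bound is at most `1/p`.
-/

open Real Nat

lemma factorial_le_exp_one_mul_sqrt_mul_div_exp_one_pow {n : ℕ} (hn : n ≠ 0) :
    (n ! : ℝ) ≤ exp 1 * √n * (n / exp 1) ^ n := by
  have hseq : Stirling.stirlingSeq n ≤ exp 1 / √2 := by
    obtain ⟨m, rfl⟩ := Nat.exists_eq_succ_of_ne_zero hn
    simpa using Stirling.stirlingSeq'_antitone (Nat.zero_le m)
  have hden : 0 < √(2 * n : ℝ) * (n / exp 1) ^ n := by positivity
  rw [Stirling.stirlingSeq, div_le_iff₀ hden] at hseq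
  calc (n ! : ℝ) ≤ exp 1 / √2 * (√(2 * n : ℝ) * (n / exp 1) ^ n) := hseq
    _ = exp 1 * √n * (n / exp 1) ^ n := by
      rw [Real.sqrt_mul zero_le_two]; field_simp

lemma factorial_le_exp_one_mul_self_mul_div_exp_one_pow {n : ℕ} (hn : n ≠ 0) :
    (n ! : ℝ) ≤ exp 1 * n * (n / exp 1) ^ n := by
  have hn1 : (1 : ℝ) ≤ n := by exact_mod_cast one_le_iff_ne_zero.mpr hn
  have hsqrt : √(n : ℝ) ≤ n := (Real.sqrt_le_left n.cast_nonneg).mpr (by nlinarith)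
  refine (factorial_le_exp_one_mul_sqrt_mul_div_exp_one_pow hn).trans ?_
  gcongr

lemma div_exp_one_pow_le_factorial (n : ℕ) : ((n : ℝ) / exp 1) ^ n ≤ n ! := by
  have h := Real.pow_div_factorial_le_exp n n.cast_nonneg n
  rw [div_le_iff₀ (by positivity), ← Real.exp_one_pow] at h
  rw [div_pow, div_le_iff₀ (by positivity)]
  linarith

lemma factorial_le_sq_mul_factorial_sub_two {n : ℕ} (hn : n ≠ 0) : n ! ≤ n ^ 2 * (n - 2)! := by
  rcases n with _ | _ | m
  · exact absurd rfl hn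
  · simp
  · have h : (m + 2) * (m + 1) * m.factorial ≤ (m + 2) * (m + 2) * m.factorial := by
      gcongr; omega
    simpa [factorial_succ, ← mul_assoc, sq] using h

lemma factorial_pow_le_exp_one_mul_self_pow_mul_div_exp_one_pow {c : ℕ} (hc : c ≠ 0) (k : ℕ) :
    (c ! : ℝ) ^ k ≤ (exp 1 * c) ^ k * (c / exp 1) ^ (k * c) := by
  rw [pow_mul', ← mul_pow]
  gcongr
  simpa only [mul_assoc] using factorial_le_exp_one_mul_self_mul_div_exp_one_pow hc

lemma pow_le_factorial_sub_two_div_factorial_pow {qt c : ℕ} (hqt : 2 ≤ qt) (hc : c ≠ 0) :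
    1 / (qt : ℝ) ^ 2 * (1 / (exp 1 * c)) ^ qt * (qt : ℝ) ^ (qt * c) ≤
      ((qt * c - 2)! : ℝ) / ((c ! : ℝ) ^ (qt - 2) * ((c - 1)! : ℝ) ^ 2) := by
  have hq : qt * c ≠ 0 := by positivity
  have hfact : (c ! : ℝ) ^ (qt - 2) * ((c - 1)! : ℝ) ^ 2 * (c : ℝ) ^ 2 = (c ! : ℝ) ^ qt := by
    have hpred : ((c - 1)! : ℝ) * c = c ! := by
      exact_mod_cast (mul_comm _ _).trans (Nat.mul_factorial_pred hc)
    rw [mul_assoc, ← mul_pow, hpred, ← pow_add, Nat.sub_add_cancel hqt]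
  rw [le_div_iff₀ (by positivity)]
  calc 1 / (qt : ℝ) ^ 2 * (1 / (exp 1 * c)) ^ qt * (qt : ℝ) ^ (qt * c) *
        ((c ! : ℝ) ^ (qt - 2) * ((c - 1)! : ℝ) ^ 2)
      = (qt : ℝ) ^ (qt * c) * (c ! : ℝ) ^ qt / (((qt * c : ℕ) : ℝ) ^ 2 * (exp 1 * c) ^ qt) := by
        rw [← hfact, div_pow, one_pow]; push_cast; field_simp
    _ ≤ (qt : ℝ) ^ (qt * c) * ((exp 1 * c) ^ qt * (c / exp 1) ^ (qt * c)) /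
          (((qt * c : ℕ) : ℝ) ^ 2 * (exp 1 * c) ^ qt) := by
        gcongr; exact factorial_pow_le_exp_one_mul_self_pow_mul_div_exp_one_pow hc qt
    _ = (((qt * c : ℕ) : ℝ) / exp 1) ^ (qt * c) / ((qt * c : ℕ) : ℝ) ^ 2 := by
        push_cast; field_simp; rw [div_pow, div_pow, mul_pow]; ring
    _ ≤ ((qt * c - 2)! : ℝ) := by
        have h : ((qt * c)! : ℝ) ≤ ((qt * c : ℕ) : ℝ) ^ 2 * ((qt * c - 2)! : ℝ) := by
          exact_mod_cast factorial_le_sq_mul_factorial_sub_two hq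
        rw [div_le_iff₀ (by positivity)]
        linarith [div_exp_one_pow_le_factorial (qt * c)]

lemma one_div_mul_le_pow_of_le_pow_succ {p y : ℝ} (hp : 0 < p) {j : ℕ} (hy : y ≤ p ^ (j + 1)) :
    1 / p * y ≤ p ^ j := by
  rwa [one_div, inv_mul_le_iff₀ hp, ← pow_succ' p j]

theorem stmt1_general (p qt c : ℕ) (hp : 2 ≤ p) (hqt : 0 < qt) (hc : 0 < c)
    (q : ℕ) (hq : q = qt * c) (j : ℕ)
    (hjmax : ∀ j' : ℕ, (p : ℝ) ^ j' ≤ (Nat.factorial (q - 2) : ℝ) /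
        ((Nat.factorial c : ℝ) ^ (qt - 2) * (Nat.factorial (c - 1) : ℝ) ^ 2) → j' ≤ j) :
    (1 / (p : ℝ)) * (1 / (qt : ℝ) ^ 2) * (1 / (Real.exp 1 * (c : ℝ))) ^ qt * (qt : ℝ) ^ q
      ≤ (p : ℝ) ^ j := by
  subst hq
  have hp1 : (1 : ℝ) ≤ p := by exact_mod_cast one_le_of_lt hp
  have hlt : (Nat.factorial (qt * c - 2) : ℝ) /
      ((Nat.factorial c : ℝ) ^ (qt - 2) * (Nat.factorial (c - 1) : ℝ) ^ 2) < (p : ℝ) ^ (j + 1) :=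
    lt_of_not_ge fun h => (hjmax (j + 1) h).not_gt j.lt_succ_self
  simp only [mul_assoc]
  refine one_div_mul_le_pow_of_le_pow_succ (by positivity) ?_
  rw [← mul_assoc]
  rcases (show qt = 1 ∨ 2 ≤ qt by omega) with rfl | hqt2
  · have hec : 1 ≤ exp 1 * c := one_le_mul_of_one_le_of_one_le (one_le_exp zero_le_one)
      (by exact_mod_cast hc)
    calc 1 / ((1 : ℕ) : ℝ) ^ 2 * (1 / (exp 1 * c)) ^ 1 * ((1 : ℕ) : ℝ) ^ (1 * c)
        = 1 / (exp 1 * c) := by simp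
      _ ≤ 1 := (div_le_one (by positivity)).mpr hec
      _ ≤ (p : ℝ) ^ (j + 1) := one_le_pow₀ hp1
  · exact (pow_le_factorial_sub_two_div_factorial_pow hqt2 hc.ne').trans hlt.le

/-- The greatest power of `p` less than or equal to
`(q−2)! / (c!^(q̃−2) · (c−1)!^2)` is at least `(1/p)·(1/q̃²)·(1/(e·c))^q̃·q̃^q`. -/
theorem stmt1 (p qt c : ℕ) (hp : 2 ≤ p) (hqt : 0 < qt) (hc : 0 < c)
    (q : ℕ) (hq : q = qt * c) (hq3 : 3 ≤ q) (j : ℕ)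
    (hj : (p : ℝ) ^ j ≤ (Nat.factorial (q - 2) : ℝ) /
        ((Nat.factorial c : ℝ) ^ (qt - 2) * (Nat.factorial (c - 1) : ℝ) ^ 2))
    (hjmax : ∀ j' : ℕ, (p : ℝ) ^ j' ≤ (Nat.factorial (q - 2) : ℝ) /
        ((Nat.factorial c : ℝ) ^ (qt - 2) * (Nat.factorial (c - 1) : ℝ) ^ 2) → j' ≤ j) :
    (1 / (p : ℝ)) * (1 / (qt : ℝ) ^ 2) * (1 / (Real.exp 1 * (c : ℝ))) ^ qt * (qt : ℝ) ^ q
      ≤ (p : ℝ) ^ j :=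
  stmt1_general p qt c hp hqt hc q hq j hjmax
end

section
/- Let 0 < ε < 2 and let θ = θ(ε) > 0 be defined by the property that {ν ∈ 𝕋 : |1 − ν| < ε} = {exp(2πiτ) : −θ < τ < θ}, where 𝕋 is the unit circle. Suppose θ < 1/4. Let ν ∈ 𝕋 \ {1} with |1 − ν| < ε, written as ν = exp(2πiτ) with −θ < τ < θ, τ ≠ 0. Then for every finite interval J of ℤ, the number of j ∈ J with |1 − ν^j| < ε is at most (3θ/(1−2θ))·|J| + 6θ/|τ|. -/
/-!
Since ν ^ j = exp (2πi jτ), the description of the ε-arc turns |1 - ν ^ j| < ε into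
|jτ - m| < θ for the integer m = round (jτ). The j sharing one value of m span less than
2θ / |τ|, and the values of m taken on [a, b] span at most (b - a)|τ| + 2θ, so the count is
at most ((b - a)|τ| + 2θ + 1)(2θ / |τ| + 1); as |τ| < θ < 1/2, this is below the stated bound.
-/

open Finset

lemma Int.card_le_of_abs_sub_le {s : Finset ℤ} {C : ℝ} (hC : 0 ≤ C)
    (h : ∀ j ∈ s, ∀ k ∈ s, |(j : ℝ) - k| ≤ C) : (#s : ℝ) ≤ C + 1 := by
  rcases s.eq_empty_or_nonempty with rfl | hs
  · simpa using hC.trans (le_add_of_nonneg_right zero_le_one)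
  set m := s.min' hs
  have hsub : s ⊆ Icc m (m + ⌊C⌋) := fun j hj => by
    have hjm : ((j - m : ℤ) : ℝ) ≤ C := by
      push_cast; exact (abs_le.1 (h j hj m (s.min'_mem hs))).2
    have := Int.le_floor.2 hjm
    exact mem_Icc.2 ⟨s.min'_le j hj, by omega⟩
  have hcard : (#(Icc m (m + ⌊C⌋)) : ℤ) = ⌊C⌋ + 1 := by
    rw [Int.card_Icc_of_le _ _ (by linarith [Int.floor_nonneg.2 hC])]; ring
  calc (#s : ℝ) ≤ #(Icc m (m + ⌊C⌋)) := by exact_mod_cast card_le_card hsub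
    _ = ((⌊C⌋ + 1 : ℤ) : ℝ) := by rw [← hcard]; norm_cast
    _ ≤ C + 1 := by push_cast; linarith [Int.floor_le C]

lemma abs_sub_round_le_of_cexp_eq {x t : ℝ}
    (h : Complex.exp (2 * Real.pi * Complex.I * x) = Complex.exp (2 * Real.pi * Complex.I * t)) :
    |x - round x| ≤ |t| := by
  obtain ⟨n, hn⟩ := Complex.exp_eq_exp_iff_exists_int.1 h
  have h2πI : (2 * Real.pi * Complex.I : ℂ) ≠ 0 := by simp [Real.pi_ne_zero]
  have hx : (x : ℂ) = t + n :=
    mul_left_cancel₀ h2πI (by linear_combination hn)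
  simpa [show x = t + n by exact_mod_cast hx] using round_le x n

lemma abs_sub_le_of_mem_Icc {a b j k : ℤ} (hj : j ∈ Icc a b) (hk : k ∈ Icc a b) :
    |(j : ℝ) - k| ≤ b - a := by
  rw [mem_Icc] at hj hk
  exact_mod_cast abs_sub_le_iff.2 ⟨by omega, by omega⟩

lemma card_le_of_abs_sub_round_lt {τ θ : ℝ} (hτ : τ ≠ 0) (hθ : 0 ≤ θ)
    {a b : ℤ} (hab : a ≤ b) (T : Finset ℤ) (hTab : T ⊆ Icc a b) (hT : ∀ j ∈ T, |j * τ - round (j * τ)| < θ) :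
    (#T : ℝ) ≤ ((b - a) * |τ| + 2 * θ + 1) * (2 * θ / |τ| + 1) := by
  classical
  have hτ' : 0 < |τ| := abs_pos.2 hτ
  set f : ℤ → ℤ := fun j => round (j * τ)
  have hfiber : ∀ m ∈ T.image f, (#{j ∈ T | f j = m} : ℝ) ≤ 2 * θ / |τ| + 1 := by
    intro m _
    refine Int.card_le_of_abs_sub_le (by positivity) fun j hj k hk => ?_
    rw [mem_filter] at hj hk
    have hjm : |(j : ℝ) * τ - m| < θ := by rw [← hj.2]; exact hT j hj.1
    have hkm : |(m : ℝ) - k * τ| < θ := by rw [← hk.2, abs_sub_comm]; exact hT k hk.1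
    rw [le_div_iff₀ hτ', ← abs_mul, sub_mul]
    linarith [abs_sub_le ((j : ℝ) * τ) m (k * τ)]
  have himage : (#(T.image f) : ℝ) ≤ (b - a) * |τ| + 2 * θ + 1 := by
    have hba : (0 : ℝ) ≤ b - a := by rw [sub_nonneg]; exact_mod_cast hab
    refine Int.card_le_of_abs_sub_le (by positivity) ?_
    simp only [mem_image, forall_exists_index, and_imp]
    rintro _ j hj rfl _ k hk rfl
    have hjk : |(j : ℝ) * τ - k * τ| ≤ (b - a) * |τ| := by
      rw [← sub_mul, abs_mul]
      exact mul_le_mul_of_nonneg_right (abs_sub_le_of_mem_Icc (hTab hj) (hTab hk)) hτ'.le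
    have hj' : |(f j : ℝ) - j * τ| < θ := by rw [abs_sub_comm]; exact hT j hj
    linarith [hT k hk, abs_sub_le (f j : ℝ) (j * τ) (f k),
      abs_sub_le ((j : ℝ) * τ) (k * τ) (f k)]
  calc (#T : ℝ) = ∑ m ∈ T.image f, (#{j ∈ T | f j = m} : ℝ) := by
        exact_mod_cast card_eq_sum_card_image f T
    _ ≤ ∑ m ∈ T.image f, (2 * θ / |τ| + 1) := sum_le_sum hfiber
    _ = #(T.image f) * (2 * θ / |τ| + 1) := by rw [sum_const, nsmul_eq_mul]
    _ ≤ _ := by gcongr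

lemma product_count_le_of_lt_half {N δ θ : ℝ} (hN : 0 ≤ N) (hδ : 0 < δ) (hδθ : δ ≤ θ)
    (hθ : θ < 1 / 2) :
    (N * δ + 2 * θ + 1) * (2 * θ / δ + 1) ≤ 3 * θ / (1 - 2 * θ) * (N + 1) + 6 * θ / δ := by
  have h2θ : 0 < 1 - 2 * θ := by linarith
  have hlin : N * (2 * θ + δ) ≤ 3 * θ / (1 - 2 * θ) * N := by
    rw [div_mul_eq_mul_div, le_div_iff₀ h2θ]
    nlinarith [mul_nonneg hN (sub_nonneg.2 hδθ), mul_nonneg hN (mul_nonneg hδ.le hδ.le),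
      mul_nonneg hN hδ.le]
  have hconst : (2 * θ + 1) * (2 * θ / δ + 1) ≤ 6 * θ / δ := by
    rw [div_add_one hδ.ne', mul_div_assoc', div_le_div_iff_of_pos_right hδ]
    nlinarith
  have hcoeff : 0 ≤ 3 * θ / (1 - 2 * θ) := by have := hδ.trans_le hδθ; positivity
  calc (N * δ + 2 * θ + 1) * (2 * θ / δ + 1)
      = N * (2 * θ + δ) + (2 * θ + 1) * (2 * θ / δ + 1) := by field_simp; ring
    _ ≤ _ := by linarith

theorem stmt2_general (ε θ τ : ℝ)
    (hθset : {ν : ℂ | ‖ν‖ = 1 ∧ ‖1 - ν‖ < ε}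
      = {ν : ℂ | ∃ t : ℝ, -θ < t ∧ t < θ ∧
          ν = Complex.exp (2 * (Real.pi : ℂ) * Complex.I * (t : ℂ))})
    (hθ4 : θ < 1 / 4)
    (ν : ℂ) (hνabs : ‖ν‖ = 1)
    (hτθ : -θ < τ) (hτθ' : τ < θ) (hτ0 : τ ≠ 0)
    (hντ : ν = Complex.exp (2 * (Real.pi : ℂ) * Complex.I * (τ : ℂ)))
    (a b : ℤ) (hab : a ≤ b) :
    ((Set.ncard {j : ℤ | j ∈ Set.Icc a b ∧ ‖1 - ν ^ j‖ < ε}) : ℝ)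
      ≤ (3 * θ / (1 - 2 * θ)) * ((Set.ncard (Set.Icc a b)) : ℝ) + 6 * θ / |τ| := by
  classical
  have hτθ_abs : |τ| < θ := abs_lt.2 ⟨hτθ, hτθ'⟩
  set S := {j ∈ Icc a b | ‖1 - ν ^ j‖ < ε}
  have hnear : ∀ j ∈ S, |(j : ℝ) * τ - round ((j : ℝ) * τ)| < θ := by
    intro j hj
    have hmem : ν ^ j ∈ {ν : ℂ | ‖ν‖ = 1 ∧ ‖1 - ν‖ < ε} :=
      ⟨by rw [norm_zpow, hνabs, one_zpow], (mem_filter.1 hj).2⟩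
    rw [hθset] at hmem
    obtain ⟨t, ht, ht', hνj⟩ := hmem
    refine (abs_sub_round_le_of_cexp_eq ?_).trans_lt (abs_lt.2 ⟨ht, ht'⟩)
    rw [← hνj, hντ, ← Complex.exp_int_mul]
    push_cast; ring_nf
  have hIcc : ((Set.Icc a b).ncard : ℝ) = (b - a : ℝ) + 1 := by
    rw [← coe_Icc, Set.ncard_coe_finset]
    exact_mod_cast (Int.card_Icc_of_le a b (by omega)).trans (by ring)
  have hS : {j : ℤ | j ∈ Set.Icc a b ∧ ‖1 - ν ^ j‖ < ε} = ↑S := by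
    ext; simp [S]
  rw [hS, Set.ncard_coe_finset, hIcc]
  refine (card_le_of_abs_sub_round_lt hτ0 ((abs_nonneg τ).trans hτθ_abs.le) hab S
    (filter_subset _ _) hnear).trans ?_
  exact product_count_le_of_lt_half (sub_nonneg.2 (Int.cast_le.2 hab)) (abs_pos.2 hτ0)
    hτθ_abs.le (by linarith)

/-- Counting lemma for powers of a unit-circle element close to 1 on an integer interval. -/
theorem stmt2 (ε θ τ : ℝ) (hε0 : 0 < ε) (hε2 : ε < 2) (hθ : 0 < θ)
    (hθset : {ν : ℂ | ‖ν‖ = 1 ∧ ‖1 - ν‖ < ε}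
      = {ν : ℂ | ∃ t : ℝ, -θ < t ∧ t < θ ∧
          ν = Complex.exp (2 * (Real.pi : ℂ) * Complex.I * (t : ℂ))})
    (hθ4 : θ < 1 / 4)
    (ν : ℂ) (hν1 : ν ≠ 1) (hνabs : ‖ν‖ = 1) (hνε : ‖1 - ν‖ < ε)
    (hτθ : -θ < τ) (hτθ' : τ < θ) (hτ0 : τ ≠ 0)
    (hντ : ν = Complex.exp (2 * (Real.pi : ℂ) * Complex.I * (τ : ℂ)))
    (a b : ℤ) (hab : a ≤ b) :
    ((Set.ncard {j : ℤ | j ∈ Set.Icc a b ∧ ‖1 - ν ^ j‖ < ε}) : ℝ)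
      ≤ (3 * θ / (1 - 2 * θ)) * ((Set.ncard (Set.Icc a b)) : ℝ) + 6 * θ / |τ| :=
  stmt2_general ε θ τ hθset hθ4 ν hνabs hτθ hτθ' hτ0 hντ a b hab
end

section
/- Let S and T be aperiodic measurable bijections on a Borel space X (defined on all of X) such that Orb_S(x) = Orb_T(x) for every x ∈ X, and such that the cocycle c_S : X → ℤ defined by Sx = T^{c_S(x)}x is measurable. If S is uniquely ergodic then T is uniquely ergodic, and in that case S and T have the same unique invariant Borel probability measure. -/
/-!
If `S x = T ^ (c x) x` with `c` measurable, then on each cell `{c = n}` of a countable measurable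
partition `S` acts as `T ^ n`, which preserves every `T`-invariant measure; since `S` is a
bijection the image cells again partition the space, so every `T`-invariant measure is
`S`-invariant. Conversely, aperiodicity makes `d x`, the unique `n` with `S ^ n x = T x`, well
defined, and its fibre `{d = n}` is `{g n = 1}` for the measurable cocycle `g n` of `S ^ n` over
`T`; so `d` is measurable and the same argument applies with `S` and `T` exchanged.
-/

open MeasureTheory Function

theorem Equiv.Perm.zpow_apply_injective {X : Type*} {S : Equiv.Perm X}
    (hS : ∀ (x : X) (n : ℤ), n ≠ 0 → (S ^ n) x ≠ x) (x : X) :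
    Injective fun n : ℤ => (S ^ n) x := by
  intro m n h
  by_contra hmn
  apply hS ((S ^ n) x) (m - n) (sub_ne_zero.mpr hmn)
  simpa [← Equiv.Perm.mul_apply, ← zpow_add] using h

section

variable {X : Type*} [MeasurableSpace X]

def Equiv.Perm.measurePreservingSubgroup (μ : Measure X) : Subgroup (Equiv.Perm X) where
  carrier := {e | MeasurePreserving e μ μ ∧ MeasurePreserving e.symm μ μ}
  mul_mem' := fun ⟨hf, hf'⟩ ⟨hg, hg'⟩ => ⟨hf.comp hg, hg'.comp hf'⟩
  one_mem' := ⟨MeasurePreserving.id μ, MeasurePreserving.id μ⟩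
  inv_mem' := fun ⟨h, h'⟩ => ⟨h', h⟩

theorem Equiv.Perm.mem_measurePreservingSubgroup {μ : Measure X} {e : Equiv.Perm X}
    (he : MeasurePreserving e μ μ) (he' : Measurable e.symm) :
    e ∈ measurePreservingSubgroup μ :=
  ⟨he, he.symm ⟨e, he.measurable, he'⟩⟩

theorem Equiv.Perm.measurableEmbedding_of_mem_measurePreservingSubgroup {μ : Measure X}
    {e : Equiv.Perm X} (he : e ∈ measurePreservingSubgroup μ) : MeasurableEmbedding e :=
  MeasurableEquiv.measurableEmbedding ⟨e, he.1.measurable, he.2.measurable⟩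

theorem measurePreserving_of_forall_eq_apply {ι : Type*} [Countable ι] [MeasurableSpace ι]
    [MeasurableSingletonClass ι] {μ : Measure X} {f : Equiv.Perm X} (hf : Measurable f)
    {e : ι → Equiv.Perm X} (he : ∀ i, e i ∈ Equiv.Perm.measurePreservingSubgroup μ)
    {c : X → ι} (hc : Measurable c) (hfe : ∀ x, f x = e (c x) x) :
    MeasurePreserving f μ μ := by
  set A : ι → Set X := fun i => c ⁻¹' {i}
  have hA : ∀ i, MeasurableSet (A i) := fun i => hc (measurableSet_singleton i)
  have hAd : Pairwise (Disjoint on A) := fun i j hij =>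
    (Set.disjoint_singleton.mpr hij).preimage c
  have hAu : ⋃ i, A i = Set.univ :=
    Set.eq_univ_of_forall fun x => Set.mem_iUnion.mpr ⟨c x, rfl⟩
  have hfA : ∀ i, f '' A i = e i '' A i := fun i =>
    Set.image_congr fun x hx => hx ▸ hfe x
  have hei := fun i => Equiv.Perm.measurableEmbedding_of_mem_measurePreservingSubgroup (he i)
  have hmap : ∀ i, (μ.restrict (A i)).map f = μ.restrict (f '' A i) := fun i =>
    calc (μ.restrict (A i)).map f = (μ.restrict (A i)).map (e i) :=
          Measure.map_congr <| (ae_restrict_iff' (hA i)).mpr <|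
            .of_forall fun x hx => hx ▸ hfe x
      _ = (μ.map (e i)).restrict (e i '' A i) := by
          rw [(hei i).restrict_map, Set.preimage_image_eq _ (e i).injective]
      _ = μ.restrict (f '' A i) := by rw [(he i).1.map_eq, hfA]
  have hfAd : Pairwise (Disjoint on fun i => f '' A i) := fun i j hij =>
    (Set.disjoint_image_iff f.injective).mpr (hAd hij)
  have hfAm : ∀ i, MeasurableSet (f '' A i) := fun i =>
    hfA i ▸ (hei i).measurableSet_image' (hA i)
  refine ⟨hf, ?_⟩
  calc μ.map f = (Measure.sum fun i => μ.restrict (A i)).map f := by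
        rw [← Measure.restrict_iUnion hAd hA, hAu, Measure.restrict_univ]
    _ = Measure.sum fun i => μ.restrict (f '' A i) := by
        rw [Measure.map_sum hf.aemeasurable]; simp only [hmap]
    _ = μ := by
        rw [← Measure.restrict_iUnion hfAd hfAm, ← Set.image_iUnion, hAu,
          Set.image_univ_of_surjective f.surjective, Measure.restrict_univ]

theorem measurePreserving_of_eq_zpow_apply {μ : Measure X} {S T : Equiv.Perm X}
    (hS : Measurable S) (hT : MeasurePreserving T μ μ) (hT' : Measurable T.symm)
    {c : X → ℤ} (hc : Measurable c) (hST : ∀ x, S x = (T ^ c x) x) :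
    MeasurePreserving S μ μ :=
  measurePreserving_of_forall_eq_apply hS
    (Subgroup.zpow_mem _ (Equiv.Perm.mem_measurePreservingSubgroup hT hT')) hc hST

theorem exists_measurable_zpow_apply_eq_zpow_apply {S T : Equiv.Perm X}
    (hS : Measurable S) (hS' : Measurable S.symm) {c : X → ℤ} (hc : Measurable c)
    (hST : ∀ x, S x = (T ^ c x) x) (n : ℤ) :
    ∃ g : X → ℤ, Measurable g ∧ ∀ x, (S ^ n) x = (T ^ g x) x := by
  have hST' : ∀ x, S.symm x = (T ^ (-c (S.symm x))) x := fun x => by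
    rw [zpow_neg, Equiv.Perm.eq_inv_iff_eq, ← hST, S.apply_symm_apply]
  induction n using Int.induction_on with
  | zero => exact ⟨0, measurable_const, fun x => rfl⟩
  | succ k ih =>
    obtain ⟨g, hg, hSg⟩ := ih
    refine ⟨fun x => g (S x) + c x, (hg.comp hS).add hc, fun x => ?_⟩
    rw [zpow_add_one, Equiv.Perm.mul_apply, hSg, zpow_add, Equiv.Perm.mul_apply, ← hST]
  | pred k ih =>
    obtain ⟨g, hg, hSg⟩ := ih
    refine ⟨fun x => g (S.symm x) + -c (S.symm x), (hg.comp hS').add (hc.comp hS').neg,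
      fun x => ?_⟩
    rw [zpow_sub_one, Equiv.Perm.mul_apply, Equiv.Perm.inv_def, hSg, zpow_add,
      Equiv.Perm.mul_apply, ← hST']

theorem exists_measurable_cocycle_of_forall_mem_range {S T : Equiv.Perm X}
    (hSa : ∀ (x : X) (n : ℤ), n ≠ 0 → (S ^ n) x ≠ x)
    (hTa : ∀ (x : X) (n : ℤ), n ≠ 0 → (T ^ n) x ≠ x)
    (hS : Measurable S) (hS' : Measurable S.symm) {c : X → ℤ} (hc : Measurable c)
    (hST : ∀ x, S x = (T ^ c x) x) (hTS : ∀ x, T x ∈ Set.range fun n : ℤ => (S ^ n) x) :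
    ∃ d : X → ℤ, Measurable d ∧ ∀ x, T x = (S ^ d x) x := by
  choose g hg hSg using exists_measurable_zpow_apply_eq_zpow_apply hS hS' hc hST
  choose d hd using hTS
  beta_reduce at hd
  have hfiber : ∀ n x, d x = n ↔ g n x = 1 := fun n x =>
    calc d x = n ↔ (S ^ d x) x = (S ^ n) x :=
          (Equiv.Perm.zpow_apply_injective hSa x).eq_iff.symm
      _ ↔ (T ^ (1 : ℤ)) x = (T ^ g n x) x := by rw [hd, hSg, zpow_one]
      _ ↔ g n x = 1 := (Equiv.Perm.zpow_apply_injective hTa x).eq_iff.trans eq_comm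
  refine ⟨d, measurable_to_countable' fun n => ?_, fun x => (hd x).symm⟩
  simpa only [Set.preimage, Set.mem_singleton_iff, hfiber] using hg n (measurableSet_singleton 1)

end

/-- If two aperiodic measurable bijections have the same orbits at every point
(with measurable cocycle), then unique ergodicity passes from one to the other,
with the same invariant measure. -/
theorem stmt5 {X : Type*} [MeasurableSpace X]
    (S T : Equiv.Perm X)
    (hSm : Measurable S) (hSm' : Measurable S.symm)
    (hTm : Measurable T) (hTm' : Measurable T.symm)
    (hSa : ∀ (x : X) (n : ℤ), n ≠ 0 → (S ^ n) x ≠ x)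
    (hTa : ∀ (x : X) (n : ℤ), n ≠ 0 → (T ^ n) x ≠ x)
    (horb : ∀ x : X,
      (Set.range fun n : ℤ => (S ^ n) x) = Set.range fun n : ℤ => (T ^ n) x)
    (cS : X → ℤ) (hcSm : Measurable cS)
    (hcS : ∀ x, S x = (T ^ cS x) x)
    (hS : ∃! μ : Measure X, IsProbabilityMeasure μ ∧ MeasurePreserving (⇑S) μ μ) :
    (∃! ν : Measure X, IsProbabilityMeasure ν ∧ MeasurePreserving (⇑T) ν ν) ∧
      ∀ μ : Measure X,
        (IsProbabilityMeasure μ ∧ MeasurePreserving (⇑S) μ μ) ↔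
          (IsProbabilityMeasure μ ∧ MeasurePreserving (⇑T) μ μ) := by
  have hTS : ∀ x, T x ∈ Set.range fun n : ℤ => (S ^ n) x := fun x =>
    horb x ▸ ⟨1, by simp⟩
  obtain ⟨cT, hcTm, hcT⟩ :=
    exists_measurable_cocycle_of_forall_mem_range hSa hTa hSm hSm' hcSm hcS hTS
  have hiff : ∀ μ : Measure X,
      (IsProbabilityMeasure μ ∧ MeasurePreserving S μ μ) ↔
        (IsProbabilityMeasure μ ∧ MeasurePreserving T μ μ) := fun μ =>
    and_congr_right' ⟨fun h => measurePreserving_of_eq_zpow_apply hTm h hSm' hcTm hcT,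
      fun h => measurePreserving_of_eq_zpow_apply hSm h hTm' hcSm hcS⟩
  exact ⟨by simpa only [hiff] using hS, hiff⟩
end

section
/- Let (q_n)_{n≥0} be integers ≥ 2 such that the infinite product ∏_{n≥0}(1 − 1/q_n) converges to a nonzero limit. For each n and each x_{n+1} ∈ {0,…,q_{n+1}−1}, define the permutation σ^{(n)}_{x_{n+1}} of {0,…,q_n−1} by σ^{(n)}_{x_{n+1}}(i) = i + x_{n+1} mod q_n. Then the map ψ : X → X, ψ(x) = (σ^{(n)}_{x_{n+1}}(x_n))_{n≥0} on X = ∏_{n≥0}{0,…,q_n−1} with product measure μ, is not injective on any measurable set of full measure. -/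
/-!
Let `θ(x)_n = x_n + (-1)^n mod q_n`. Like every coordinatewise permutation, `θ` preserves `μ`: it
permutes the cylinders, which have equal measure at each length and determine `μ`. Off the
wrap-around points (`x_n = q_n - 1` for even `n`, `x_n = 0` for odd `n`) `θ` moves consecutive
coordinates by `1` in opposite directions, so `ψ ∘ θ = ψ` there while `θ x ≠ x`. The sequences
avoiding every wrap-around point form a set `Y` of measure `∏ (1 - 1/q_n) > 0`. If `ψ` were
injective on a set `A` of full measure, then `A ∩ θ⁻¹ A` would have full measure and meet `Y`.
-/

open MeasureTheory

/-- The coordinatewise map `ψ(x)_n = x_n + x_{n+1} mod q_n`. -/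
def psiShift (q : ℕ → ℕ) (hq : ∀ n, 0 < q n) (x : ∀ n, Fin (q n)) : ∀ n, Fin (q n) :=
  fun n => ⟨((x n : ℕ) + (x (n + 1) : ℕ)) % q n, Nat.mod_lt _ (hq n)⟩

open PiNat ProbabilityTheory Filter Topology
open scoped ENNReal

section Cylinders

variable {E : ℕ → Type*}

theorem PiNat.isPiSystem_cylinders :
    IsPiSystem {s : Set (∀ n, E n) | ∃ x n, s = cylinder x n} := by
  rintro _ ⟨x, m, rfl⟩ _ ⟨y, n, rfl⟩ ⟨z, hzx, hzy⟩
  rw [← mem_cylinder_iff_eq.1 hzx, ← mem_cylinder_iff_eq.1 hzy]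
  rcases le_total m n with h | h
  · exact ⟨z, n, Set.inter_eq_right.2 (cylinder_anti z h)⟩
  · exact ⟨z, m, Set.inter_eq_left.2 (cylinder_anti z h)⟩

theorem PiNat.preimage_piCongrRight_cylinder (σ : ∀ n, E n ≃ E n) (x : ∀ n, E n) (n : ℕ) :
    Equiv.piCongrRight σ ⁻¹' cylinder x n = cylinder ((Equiv.piCongrRight σ).symm x) n := by
  ext y
  simp [mem_cylinder_iff, Equiv.eq_symm_apply]

variable [∀ n, TopologicalSpace (E n)] [∀ n, DiscreteTopology (E n)] [∀ n, Countable (E n)]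
  [∀ n, MeasurableSpace (E n)] [∀ n, BorelSpace (E n)]

theorem PiNat.measurableSpace_pi_eq_generateFrom_cylinders :
    (MeasurableSpace.pi : MeasurableSpace (∀ n, E n)) =
      .generateFrom {s | ∃ x n, s = cylinder x n} := by
  rw [BorelSpace.measurable_eq (α := ∀ n, E n),
    (isTopologicalBasis_cylinders E).borel_eq_generateFrom]

theorem PiNat.measure_ext_of_cylinder {μ ν : Measure (∀ n, E n)} [IsProbabilityMeasure μ]
    [IsProbabilityMeasure ν] (h : ∀ x n, μ (cylinder x n) = ν (cylinder x n)) : μ = ν :=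
  ext_of_generate_finite _ measurableSpace_pi_eq_generateFrom_cylinders isPiSystem_cylinders
    (by rintro _ ⟨x, n, rfl⟩; exact h x n) (by simp)

theorem PiNat.measurePreserving_piCongrRight {μ : Measure (∀ n, E n)} [IsProbabilityMeasure μ]
    (hμ : ∀ x y n, μ (cylinder x n) = μ (cylinder y n)) (σ : ∀ n, E n ≃ E n) :
    MeasurePreserving (Equiv.piCongrRight σ) μ μ := by
  have hσ : Measurable (Equiv.piCongrRight σ) :=
    measurable_pi_lambda _ fun n => (measurable_of_countable (σ n)).comp (measurable_pi_apply n)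
  have := Measure.isProbabilityMeasure_map (μ := μ) hσ.aemeasurable
  refine ⟨hσ, measure_ext_of_cylinder fun x n => ?_⟩
  rw [Measure.map_apply hσ (isOpen_cylinder E x n).measurableSet, preimage_piCongrRight_cylinder]
  exact hμ _ _ _

end Cylinders

section UniformProduct

variable {E : ℕ → Type*} [∀ n, TopologicalSpace (E n)] [∀ n, DiscreteTopology (E n)]
  [∀ n, Fintype (E n)] [∀ n, Nonempty (E n)] [∀ n, MeasurableSpace (E n)]
  [∀ n, BorelSpace (E n)]

theorem PiNat.eq_infinitePi_uniformOn {μ : Measure (∀ n, E n)} [IsProbabilityMeasure μ]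
    (hμ : ∀ x n,
      μ (cylinder x n) = 1 / ∏ i ∈ Finset.range n, (Fintype.card (E i) : ℝ≥0∞)) :
    μ = Measure.infinitePi fun n => uniformOn (Set.univ : Set (E n)) := by
  refine measure_ext_of_cylinder fun x n => ?_
  rw [hμ, cylinder_eq_pi, Measure.infinitePi_pi _ fun _ _ => measurableSet_singleton _]
  simp only [uniformOn_univ, Measure.count_singleton, one_div]
  exact ENNReal.prod_inv_distrib fun i _ j _ _ => Or.inr (ENNReal.natCast_ne_top _)

end UniformProduct

theorem ProbabilityTheory.uniformOn_univ_compl_singleton {α : Type*} [Fintype α]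
    [MeasurableSpace α] [MeasurableSingletonClass α] (a : α) :
    uniformOn Set.univ {a}ᶜ = ENNReal.ofReal (1 - 1 / Fintype.card α) := by
  have : Nonempty α := ⟨a⟩
  rw [prob_compl_eq_one_sub (measurableSet_singleton a), uniformOn_univ, Measure.count_singleton,
    ENNReal.ofReal_sub _ (by positivity), ENNReal.ofReal_one,
    ENNReal.ofReal_div_of_pos (by simp [Fintype.card_pos]), ENNReal.ofReal_one,
    ENNReal.ofReal_natCast]

theorem MeasureTheory.tendsto_measure_pi_range {E : ℕ → Type*} [∀ n, MeasurableSpace (E n)]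
    (μ : Measure (∀ n, E n)) [IsFiniteMeasure μ] {t : ∀ n, Set (E n)}
    (ht : ∀ n, MeasurableSet (t n)) :
    Tendsto (fun N => μ (Set.pi (Finset.range N : Set ℕ) t)) atTop
      (𝓝 (μ (Set.univ.pi t))) := by
  have : Set.univ.pi t = ⋂ N, Set.pi (Finset.range N : Set ℕ) t := by
    ext x
    simp only [Set.mem_pi, Set.mem_iInter, Finset.coe_range, Set.mem_Iio]
    exact ⟨fun h N n _ => h n trivial, fun h n _ => h (n + 1) n n.lt_succ_self⟩
  rw [this]
  refine tendsto_measure_iInter_atTop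
    (fun N => (MeasurableSet.pi (Set.to_countable _) fun n _ => ht n).nullMeasurableSet)
    (fun M N h => Set.pi_mono' (fun _ _ => le_rfl) (by simpa using h)) ⟨0, measure_ne_top μ _⟩

theorem PiNat.infinitePi_uniformOn_setOf_forall_ne {E : ℕ → Type*} [∀ n, Fintype (E n)]
    [∀ n, Nonempty (E n)] [∀ n, MeasurableSpace (E n)] [∀ n, MeasurableSingletonClass (E n)]
    (w : ∀ n, E n) {L : ℝ}
    (hL : Tendsto (fun N => ∏ n ∈ Finset.range N, (1 - 1 / (Fintype.card (E n) : ℝ))) atTop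
      (𝓝 L)) :
    Measure.infinitePi (fun n => uniformOn (Set.univ : Set (E n))) {x | ∀ n, x n ≠ w n} =
      ENNReal.ofReal L := by
  have hset : {x | ∀ n, x n ≠ w n} = Set.univ.pi fun n => {w n}ᶜ := by ext; simp
  refine hset ▸ tendsto_nhds_unique
    (tendsto_measure_pi_range _ fun n => (measurableSet_singleton (w n)).compl) ?_
  have hfactor : ∀ n, 0 ≤ 1 - 1 / (Fintype.card (E n) : ℝ) := fun n =>
    sub_nonneg.2 (div_le_one_of_le₀ (by exact_mod_cast Fintype.card_pos) (Nat.cast_nonneg _))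
  have hpartial : ∀ N, Measure.infinitePi (fun n => uniformOn (Set.univ : Set (E n)))
      (Set.pi (Finset.range N : Set ℕ) fun n => {w n}ᶜ) =
        ENNReal.ofReal (∏ n ∈ Finset.range N, (1 - 1 / (Fintype.card (E n) : ℝ))) := by
    intro N
    rw [Measure.infinitePi_pi _ fun n _ => (measurableSet_singleton _).compl,
      ENNReal.ofReal_prod_of_nonneg fun n _ => hfactor n]
    simp only [uniformOn_univ_compl_singleton]
  simpa only [hpartial] using ENNReal.tendsto_ofReal hL

theorem val_finRotate_of_lt {m : ℕ} {i : Fin m} (h : (i : ℕ) + 1 < m) :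
    (finRotate m i : ℕ) = i + 1 := by
  obtain ⟨k, rfl⟩ : ∃ k, m = k + 1 := ⟨m - 1, by omega⟩
  exact coe_finRotate_of_ne_last (Fin.ne_of_val_ne (by simp; omega))

theorem val_finRotate_symm_of_ne_zero {m : ℕ} {i : Fin m} (h : (i : ℕ) ≠ 0) :
    ((finRotate m).symm i : ℕ) = i - 1 :=
  have := i.neZero
  coe_finRotate_symm_of_ne_zero (Fin.ne_of_val_ne h)

namespace PsiShift

def theta (q : ℕ → ℕ) : (∀ n, Fin (q n)) ≃ (∀ n, Fin (q n)) :=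
  Equiv.piCongrRight fun n => if Even n then finRotate (q n) else (finRotate (q n)).symm

def wrapPoint (q : ℕ → ℕ) (hq0 : ∀ n, 0 < q n) (n : ℕ) : Fin (q n) :=
  if Even n then ⟨q n - 1, Nat.sub_lt (hq0 n) one_pos⟩ else ⟨0, hq0 n⟩

variable {q : ℕ → ℕ} {hq0 : ∀ n, 0 < q n} {x : ∀ n, Fin (q n)}

theorem val_theta_of_ne_wrapPoint (hx : ∀ n, x n ≠ wrapPoint q hq0 n) (n : ℕ) :
    (theta q x n : ℕ) = if Even n then (x n : ℕ) + 1 else (x n : ℕ) - 1 := by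
  have hxn := Fin.val_ne_iff.2 (hx n)
  by_cases hn : Even n
  · simp only [theta, Equiv.piCongrRight_apply, Pi.map_apply, wrapPoint, hn, if_true] at hxn ⊢
    exact val_finRotate_of_lt (by omega)
  · simp only [theta, Equiv.piCongrRight_apply, Pi.map_apply, wrapPoint, hn, if_false] at hxn ⊢
    exact val_finRotate_symm_of_ne_zero hxn

theorem psiShift_theta (hx : ∀ n, x n ≠ wrapPoint q hq0 n) :
    psiShift q hq0 (theta q x) = psiShift q hq0 x := by
  funext n
  refine Fin.ext (congrArg (· % q n) ?_)
  have hn := val_theta_of_ne_wrapPoint hx n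
  have hn1 := val_theta_of_ne_wrapPoint hx (n + 1)
  have hxn := Fin.val_ne_iff.2 (hx n)
  have hxn1 := Fin.val_ne_iff.2 (hx (n + 1))
  simp only [wrapPoint, Nat.even_add_one, apply_ite Fin.val] at hn1 hxn hxn1
  split_ifs at hn hn1 hxn hxn1 <;> omega

theorem theta_ne_self (hx : ∀ n, x n ≠ wrapPoint q hq0 n) : theta q x ≠ x := fun h => by
  have h0 := val_theta_of_ne_wrapPoint hx 0
  rw [h, if_pos Even.zero] at h0
  omega

end PsiShift

theorem stmt9_general (q : ℕ → ℕ) (hq0 : ∀ n, 0 < q n)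
    (μ : Measure (∀ n, Fin (q n))) [IsProbabilityMeasure μ]
    (hμ : ∀ (n : ℕ) (y : ∀ i, Fin (q i)),
      μ {x | ∀ i < n, x i = y i} = 1 / ∏ i ∈ Finset.range n, (q i : ENNReal))
    (hprod : ∃ L : ℝ, 0 < L ∧ Filter.Tendsto
      (fun N => ∏ n ∈ Finset.range N, (1 - 1 / (q n : ℝ))) Filter.atTop (nhds L)) :
    ¬ ∃ A : Set (∀ n, Fin (q n)), MeasurableSet A ∧ μ A = 1 ∧
      Set.InjOn (psiShift q hq0) A := by
  rintro ⟨A, hA, hA1, hinj⟩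
  obtain ⟨L, hL, hlim⟩ := hprod
  have : ∀ n, NeZero (q n) := fun n => NeZero.of_pos (hq0 n)
  have hcyl : ∀ y n, μ (PiNat.cylinder y n) =
      1 / ∏ i ∈ Finset.range n, (Fintype.card (Fin (q i)) : ℝ≥0∞) := by
    intro y n
    simp only [Fintype.card_fin]
    exact hμ n y
  have hθ : MeasurePreserving (PsiShift.theta q) μ μ :=
    measurePreserving_piCongrRight (fun x y n => (hcyl x n).trans (hcyl y n).symm) _
  have hY : μ {x | ∀ n, x n ≠ PsiShift.wrapPoint q hq0 n} ≠ 0 := by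
    rw [eq_infinitePi_uniformOn hcyl,
      infinitePi_uniformOn_setOf_forall_ne _ (by simpa only [Fintype.card_fin] using hlim)]
    exact (ENNReal.ofReal_pos.2 hL).ne'
  have hAae : ∀ᵐ x ∂μ, x ∈ A := (mem_ae_iff_prob_eq_one hA).2 hA1
  obtain ⟨x, hxY, hxA, hθxA⟩ := Measure.exists_mem_of_measure_ne_zero_of_ae hY
    (ae_restrict_of_ae (hAae.and (hθ.quasiMeasurePreserving.ae hAae)))
  exact PsiShift.theta_ne_self hxY (hinj hθxA hxA (PsiShift.psiShift_theta hxY))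

/-- If `∏ (1 − 1/q_n)` converges to a nonzero limit, the map
`ψ(x) = (x_n + x_{n+1} mod q_n)_n` is not injective on any set of full measure. -/
theorem stmt9 (q : ℕ → ℕ) (hq : ∀ n, 2 ≤ q n) (hq0 : ∀ n, 0 < q n)
    (μ : Measure (∀ n, Fin (q n))) [IsProbabilityMeasure μ]
    (hμ : ∀ (n : ℕ) (y : ∀ i, Fin (q i)),
      μ {x | ∀ i < n, x i = y i} = 1 / ∏ i ∈ Finset.range n, (q i : ENNReal))
    (hprod : ∃ L : ℝ, 0 < L ∧ Filter.Tendsto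
      (fun N => ∏ n ∈ Finset.range N, (1 - 1 / (q n : ℝ))) Filter.atTop (nhds L)) :
    ¬ ∃ A : Set (∀ n, Fin (q n)), MeasurableSet A ∧ μ A = 1 ∧
      Set.InjOn (psiShift q hq0) A :=
  stmt9_general q hq0 μ hμ hprod
end

section
/- Let q_n ≥ 2 for all n, X = ∏_{n≥0}{0,…,q_n−1}, and suppose given for each n ≥ 0 a family of permutations σ^{(n)}_i of {0,…,q_n−1} (0 ≤ i < q_{n+1}). Define F_n := {a ∈ {0,…,q_n−1} : σ^{(n)}_i(a) = a for all 0 ≤ i < q_{n+1}}. If the series ∑_n |F_n|/q_n diverges, then the set X₀ = {x ∈ X : x_n ∈ F_n for infinitely many n} has full product measure, and the map ψ(x) = (σ^{(n)}_{x_{n+1}}(x_n))_{n≥0} restricts to a bijection of X₀ onto itself. -/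
/-!
Under the uniform product measure the events `x n ∈ F n` are independent with probabilities
`|F n| / q n`, so the second Borel–Cantelli lemma gives full measure to the points that visit
`F n` infinitely often. Since `σ n i` is a bijection fixing `F n` pointwise, `ψ x n ∈ F n` forces
`ψ x n = x n`; hence `ψ` preserves the set of such points, and both `x` and a preimage of a given
`z` are recovered by solving `σ n (x (n + 1)) (x n) = z n` downwards from each index where
`z n ∈ F n`.
-/

open MeasureTheory ProbabilityTheory Filter Finset
open scoped ENNReal

section Cylinders

variable {α : ℕ → Type*} [∀ i, Fintype (α i)] [∀ i, MeasurableSpace (α i)]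
  [∀ i, MeasurableSingletonClass (α i)]

def IsUniformOnCylinders (μ : Measure (∀ i, α i)) : Prop :=
  ∀ (n : ℕ) (y : ∀ i, α i),
    μ {x | ∀ i < n, x i = y i} = 1 / ∏ i ∈ range n, (Fintype.card (α i) : ℝ≥0∞)

variable [Nonempty (∀ i, α i)] {μ : Measure (∀ i, α i)}

lemma measure_forall_lt_mem (hμ : IsUniformOnCylinders μ) (n : ℕ) (t : ∀ i, Finset (α i)) :
    μ {x | ∀ i < n, x i ∈ t i} = ∏ i ∈ range n, (#(t i) / Fintype.card (α i) : ℝ≥0∞) := by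
  classical
  obtain ⟨x₀⟩ := ‹Nonempty (∀ i, α i)›
  let R : (∀ i, α i) → (∀ i : Fin n, α i) := fun x i => x i
  have hR : Measurable R := measurable_pi_lambda _ fun i => measurable_pi_apply _
  have hfiber (y : ∀ i : Fin n, α i) :
      μ (R ⁻¹' {y}) = 1 / ∏ i ∈ range n, (Fintype.card (α i) : ℝ≥0∞) := by
    convert hμ n (fun i => if h : i < n then y ⟨i, h⟩ else x₀ i) using 2
    ext x
    simp only [Set.mem_preimage, Set.mem_singleton_iff, funext_iff, Fin.forall_iff, R]
    exact forall_congr' fun i => forall_congr' fun h => by rw [dif_pos h]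
  calc μ {x | ∀ i < n, x i ∈ t i}
      = μ.map R (Fintype.piFinset fun i : Fin n => t i) := by
        rw [Measure.map_apply hR (Set.toFinite _).measurableSet]
        congr 1
        ext x
        simp [R, Fin.forall_iff]
    _ = ∑ y ∈ Fintype.piFinset fun i : Fin n => t i, μ.map R {y} :=
        sum_measure_singleton.symm
    _ = (∏ i ∈ range n, #(t i) : ℕ) * (1 / ∏ i ∈ range n, (Fintype.card (α i) : ℝ≥0∞)) := by
        simp only [Measure.map_apply hR (measurableSet_singleton _), hfiber, sum_const,
          Fintype.card_piFinset, nsmul_eq_mul, Fin.prod_univ_eq_prod_range (fun i => #(t i))]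
    _ = _ := by
        rw [ENNReal.prod_div_distrib_of_ne_top (fun i _ => ENNReal.natCast_ne_top _), mul_one_div,
          Nat.cast_prod]

lemma measure_pi_finset (hμ : IsUniformOnCylinders μ) (s : Finset ℕ) (t : ∀ i, Finset (α i)) :
    μ (Set.pi s fun i => t i) = ∏ i ∈ s, (#(t i) / Fintype.card (α i) : ℝ≥0∞) := by
  classical
  obtain ⟨n, hsn⟩ := s.exists_nat_subset_range
  let t' i := if i ∈ s then t i else univ
  have hbox : Set.pi s (fun i => (t i : Set (α i))) = {x | ∀ i < n, x i ∈ t' i} := by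
    ext x
    simp only [Set.mem_pi, Finset.mem_coe, t']
    refine ⟨fun hx i _ => ?_, fun hx i hi => by simpa [hi] using hx i (mem_range.mp (hsn hi))⟩
    split_ifs with hi
    exacts [hx i hi, mem_univ _]
  have hcard (i) : (Fintype.card (α i) : ℝ≥0∞) ≠ 0 := by
    have : Nonempty (α i) := ‹Nonempty (∀ i, α i)›.map (· i)
    simp [Fintype.card_ne_zero]
  rw [hbox, measure_forall_lt_mem hμ, ← prod_subset hsn fun i _ hi => by
    simp [t', hi, ENNReal.div_self (hcard i) (ENNReal.natCast_ne_top _)]]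
  exact prod_congr rfl fun i hi => by simp [t', hi]

lemma measure_setOf_apply_mem (hμ : IsUniformOnCylinders μ) (t : ∀ i, Finset (α i)) (i : ℕ) :
    μ {x | x i ∈ t i} = #(t i) / Fintype.card (α i) := by
  have hbox : {x : ∀ i, α i | x i ∈ t i} = Set.pi ({i} : Finset ℕ) fun i => t i := by
    ext x; simp
  rw [hbox, measure_pi_finset hμ, prod_singleton]

lemma iIndepSet_setOf_apply_mem (hμ : IsUniformOnCylinders μ) (t : ∀ i, Finset (α i)) :
    iIndepSet (fun n => {x | x n ∈ t n}) μ := by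
  refine (iIndepSet_iff_meas_biInter fun n => ?_).mpr fun s => ?_
  · exact measurable_pi_apply n (t n).measurableSet
  have hbox : ⋂ i ∈ s, {x : ∀ i, α i | x i ∈ t i} = Set.pi s fun i => t i := by
    ext x; simp
  rw [hbox, measure_pi_finset hμ]
  exact prod_congr rfl fun i _ => (measure_setOf_apply_mem hμ t i).symm

lemma measure_setOf_infinite_apply_mem_eq_one (hμ : IsUniformOnCylinders μ)
    (t : ∀ i, Finset (α i)) (hdiv : ¬ Summable fun n => (#(t n) : ℝ) / Fintype.card (α n)) :
    μ {x | {n | x n ∈ t n}.Infinite} = 1 := by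
  have hlimsup : {x : ∀ i, α i | {n | x n ∈ t n}.Infinite}
      = limsup (fun n => {x | x n ∈ t n}) atTop := by
    ext x
    simp [mem_limsup_iff_frequently_mem, Nat.frequently_atTop_iff_infinite]
  rw [hlimsup]
  refine measure_limsup_eq_one (fun n => measurable_pi_apply n (t n).measurableSet)
    (iIndepSet_setOf_apply_mem hμ t) ?_
  by_contra hsum
  refine hdiv ((ENNReal.summable_toReal hsum).congr fun n => ?_)
  rw [measure_setOf_apply_mem hμ, ENNReal.toReal_div, ENNReal.toReal_natCast,
    ENNReal.toReal_natCast]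

end Cylinders

section PermByNext

variable {β : ℕ → Type*} (σ : ∀ n, β (n + 1) → Equiv.Perm (β n))

def commonFix (n : ℕ) : Set (β n) := {a | ∀ i, σ n i a = a}

def permByNext (x : ∀ n, β n) : ∀ n, β n := fun n => σ n (x (n + 1)) (x n)

def oftenFixed : Set (∀ n, β n) := {x | {n | x n ∈ commonFix σ n}.Infinite}

/-- `solveDown σ z d k = x k` for the solution of `σ j (x (j + 1)) (x j) = z j` (`k ≤ j < k + d`)
with `x (k + d) = z (k + d)`. -/
def solveDown (z : ∀ n, β n) : ℕ → ∀ k, β k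
  | 0, k => z k
  | d + 1, k => (σ k (solveDown z d (k + 1))).symm (z k)

variable {σ}

lemma eq_of_apply_eq_mem_commonFix {n : ℕ} {a b : β n} (hb : b ∈ commonFix σ n) {i : β (n + 1)}
    (h : σ n i a = b) : a = b :=
  (σ n i).injective (by rw [h, hb i])

lemma permByNext_mem_commonFix_iff {x : ∀ n, β n} {n : ℕ} :
    permByNext σ x n ∈ commonFix σ n ↔ x n ∈ commonFix σ n := by
  refine ⟨fun h => ?_, fun h => by rwa [permByNext, h]⟩
  rwa [eq_of_apply_eq_mem_commonFix h rfl]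

lemma permByNext_mem_oftenFixed_iff {x : ∀ n, β n} :
    permByNext σ x ∈ oftenFixed σ ↔ x ∈ oftenFixed σ := by
  simp only [oftenFixed, Set.mem_ofPred_eq, permByNext_mem_commonFix_iff]

lemma apply_eq_of_permByNext_eq {x y : ∀ n, β n} (h : permByNext σ x = permByNext σ y) {n : ℕ}
    (hn : x n = y n) {k : ℕ} (hk : k ≤ n) : x k = y k := by
  induction hk using Nat.decreasingInduction with
  | self => exact hn
  | of_succ k _ ih =>
    have hk := congrFun h k
    rw [permByNext, permByNext, ih] at hk
    exact (σ k _).injective hk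

lemma injOn_permByNext : Set.InjOn (permByNext σ) (oftenFixed σ) := by
  intro x hx y _ h
  funext k
  obtain ⟨n, hn, hkn⟩ := hx.exists_gt k
  have hyn : y n ∈ commonFix σ n := by
    rw [← permByNext_mem_commonFix_iff, ← h, permByNext_mem_commonFix_iff]; exact hn
  have hxy : x n = y n := by
    rw [← hn (x (n + 1)), ← hyn (y (n + 1))]; exact congrFun h n
  exact apply_eq_of_permByNext_eq h hxy hkn.le

lemma solveDown_of_mem_commonFix {z : ∀ n, β n} {k : ℕ} (hz : z k ∈ commonFix σ k) (d : ℕ) :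
    solveDown σ z d k = z k := by
  cases d with
  | zero => rfl
  | succ d => exact Equiv.symm_apply_eq _ |>.mpr (hz _).symm

lemma solveDown_add {z : ∀ n, β n} {k d : ℕ} (hz : z (k + d) ∈ commonFix σ (k + d)) (e : ℕ) :
    solveDown σ z (d + e) k = solveDown σ z d k := by
  induction d generalizing k with
  | zero => rw [zero_add]; exact solveDown_of_mem_commonFix hz e
  | succ d ih =>
    rw [Nat.succ_add, solveDown, solveDown, ih (by rwa [Nat.add_right_comm])]

lemma solveDown_sub_of_le {z : ∀ n, β n} {k m : ℕ} (hz : z m ∈ commonFix σ m) (hkm : k ≤ m)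
    {n : ℕ} (hmn : m ≤ n) : solveDown σ z (n - k) k = solveDown σ z (m - k) k := by
  obtain ⟨d, rfl⟩ := Nat.exists_eq_add_of_le hkm
  obtain ⟨e, rfl⟩ := Nat.exists_eq_add_of_le hmn
  rw [Nat.add_sub_cancel_left, Nat.add_assoc, Nat.add_sub_cancel_left]
  exact solveDown_add hz e

lemma apply_solveDown (z : ∀ n, β n) (d k : ℕ) :
    σ k (solveDown σ z d (k + 1)) (solveDown σ z (d + 1) k) = z k :=
  Equiv.apply_symm_apply _ _

lemma surjOn_permByNext : Set.SurjOn (permByNext σ) (oftenFixed σ) (oftenFixed σ) := by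
  intro z hz
  choose N hN hkN using fun k => hz.exists_gt k
  let x k := solveDown σ z (N k - k) k
  have hx : permByNext σ x = z := by
    funext k
    let n := max (N k) (N (k + 1))
    have hkn : k + 1 ≤ n := (hkN (k + 1)).le.trans (le_max_right _ _)
    have hk : x k = solveDown σ z (n - (k + 1) + 1) k := by
      rw [show n - (k + 1) + 1 = n - k by omega,
        solveDown_sub_of_le (hN k) (hkN k).le (le_max_left _ _)]
    have hk1 : x (k + 1) = solveDown σ z (n - (k + 1)) (k + 1) :=
      (solveDown_sub_of_le (hN (k + 1)) (hkN (k + 1)).le (le_max_right _ _)).symm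
    rw [permByNext, hk, hk1, apply_solveDown]
  exact ⟨x, permByNext_mem_oftenFixed_iff.mp (hx ▸ hz), hx⟩

theorem bijOn_permByNext : Set.BijOn (permByNext σ) (oftenFixed σ) (oftenFixed σ) :=
  ⟨fun _ hx => permByNext_mem_oftenFixed_iff.mpr hx, injOn_permByNext, surjOn_permByNext⟩

end PermByNext

theorem stmt12_general (q : ℕ → ℕ)
    (μ : Measure (∀ n, Fin (q n))) [IsProbabilityMeasure μ]
    (hμ : ∀ (n : ℕ) (y : ∀ i, Fin (q i)),
      μ {x | ∀ i < n, x i = y i} = 1 / ∏ i ∈ Finset.range n, (q i : ENNReal))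
    (σ : ∀ n, Fin (q (n + 1)) → Equiv.Perm (Fin (q n)))
    (hdiv : ¬ Summable (fun n =>
      ((Finset.univ.filter (fun a : Fin (q n) => ∀ i, σ n i a = a)).card : ℝ) / (q n : ℝ))) :
    μ {x | {n | ∀ i, σ n i (x n) = x n}.Infinite} = 1 ∧
      Set.BijOn (fun (x : ∀ n, Fin (q n)) => fun n => σ n (x (n + 1)) (x n))
        {x | {n | ∀ i, σ n i (x n) = x n}.Infinite}
        {x | {n | ∀ i, σ n i (x n) = x n}.Infinite} := by
  have := nonempty_of_isProbabilityMeasure μ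
  have hfull := measure_setOf_infinite_apply_mem_eq_one (α := fun n => Fin (q n))
    (fun n y => by simpa only [Fintype.card_fin] using hμ n y)
    (fun n => univ.filter fun a => ∀ i, σ n i a = a) (by simpa only [Fintype.card_fin] using hdiv)
  simp only [mem_filter, mem_univ, true_and] at hfull
  exact ⟨hfull, bijOn_permByNext⟩

/-- If the permutations `σ^{(n)}_i` have enough common fixed points
(`∑ |F_n|/q_n = ∞`), then the set of points whose coordinates lie in `F_n`
infinitely often has full measure, and `ψ` restricts to a bijection of it. -/
theorem stmt12 (q : ℕ → ℕ) (hq : ∀ n, 2 ≤ q n)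
    (μ : Measure (∀ n, Fin (q n))) [IsProbabilityMeasure μ]
    (hμ : ∀ (n : ℕ) (y : ∀ i, Fin (q i)),
      μ {x | ∀ i < n, x i = y i} = 1 / ∏ i ∈ Finset.range n, (q i : ENNReal))
    (σ : ∀ n, Fin (q (n + 1)) → Equiv.Perm (Fin (q n)))
    (hdiv : ¬ Summable (fun n =>
      ((Finset.univ.filter (fun a : Fin (q n) => ∀ i, σ n i a = a)).card : ℝ) / (q n : ℝ))) :
    μ {x | {n | ∀ i, σ n i (x n) = x n}.Infinite} = 1 ∧
      Set.BijOn (fun (x : ∀ n, Fin (q n)) => fun n => σ n (x (n + 1)) (x n))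
        {x | {n | ∀ i, σ n i (x n) = x n}.Infinite}
        {x | {n | ∀ i, σ n i (x n) = x n}.Infinite} :=
  stmt12_general q μ hμ σ hdiv
end

section
/- Let α > 0 and let ∏_{p prime} p^{k_p} be a supernatural number (k_p ∈ ℕ ∪ {∞}) with k_{p⋆} = ∞ for some prime p⋆. Then there exists a sequence (q_n)_{n≥0} of integers ≥ 2 such that: (1) q_{n+1} ≤ (q_n − 2)! for every n ≥ 0; (2) (log q_n)/(q_0⋯q_{n−1}) → α as n → ∞; (3) for every prime p, ∑_{n≥0} ν_p(q_n) = k_p, where ν_p denotes p-adic valuation. -/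
/-!
Enumerate the pairs `(p, j)` with `p` prime and `j < k_p` along `ℕ ≃ ℕ × ℕ`, and let `m_n` be the
prime of the `n`-th pair (or `1`); then `∑ ν_p(m_n) = k_p` and `m_n ≤ n + 1`. Put
`q_n = p⋆^{a_n} m_n` with `a_n` least such that `log q_n ≥ α q_0⋯q_{n-1} + n + 4 + log p⋆`. Every
`q_n` is divisible by `p⋆`, which accounts for `k_{p⋆} = ∞`, and the other valuations come from the
`m_n`. Since `log q_n - α q_0⋯q_{n-1} = O(n)` while `q_0⋯q_{n-1} ≥ 2^n`, the ratio tends to `α`.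
Finally `log q_{n+1} ≈ α q_0⋯q_{n-1} q_n ≤ q_n log q_n - (n + 4) q_n`, which `log m! ≥ m log m - m`
turns into `q_{n+1} ≤ (q_n - 2)!`.
-/

open Filter Topology Real

namespace ENat

protected theorem summable {ι : Type*} (f : ι → ℕ∞) : Summable f :=
  ⟨_, hasSum_of_isLUB _ (isLUB_iSup (f := fun s : Finset ι => ∑ i ∈ s, f i))⟩

theorem tsum_eq_top_of_one_le {f : ℕ → ℕ∞} (hf : ∀ n, 1 ≤ f n) : ∑' n, f n = ⊤ := by
  refine ENat.eq_top_iff_forall_ge.2 fun N => ?_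
  calc (N : ℕ∞) = ∑ _i ∈ Finset.range N, 1 := by simp
    _ ≤ ∑ i ∈ Finset.range N, f i := Finset.sum_le_sum fun i _ => hf i
    _ ≤ ∑' n, f n := (ENat.summable f).sum_le_tsum _ fun _ _ => zero_le

theorem tsum_ite_natCast_lt (K : ℕ∞) : ∑' j : ℕ, (if (j : ℕ∞) < K then 1 else 0) = K := by
  induction K using ENat.recTopCoe with
  | top => exact tsum_eq_top_of_one_le fun j => by simp
  | coe m =>
    rw [tsum_eq_sum (s := Finset.range m) fun j hj => by simpa using hj]
    simp [Finset.sum_boole, Finset.filter_true_of_mem fun j hj => Finset.mem_range.1 hj]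

end ENat

open Classical in
noncomputable def supernaturalFactor (k : ℕ → ℕ∞) (n : ℕ) : ℕ :=
  if n.unpair.1.Prime ∧ (n.unpair.2 : ℕ∞) < k n.unpair.1 then n.unpair.1 else 1

namespace supernaturalFactor

variable (k : ℕ → ℕ∞)

theorem pos (n : ℕ) : 0 < supernaturalFactor k n := by
  unfold supernaturalFactor
  split_ifs with h
  exacts [h.1.pos, one_pos]

theorem le_succ (n : ℕ) : supernaturalFactor k n ≤ n + 1 := by
  unfold supernaturalFactor
  split_ifs
  exacts [n.unpair_left_le.trans n.le_succ, by omega]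

theorem factorization_apply {p : ℕ} (hp : p.Prime) (n : ℕ) :
    (supernaturalFactor k n).factorization p =
      if n.unpair.1 = p ∧ (n.unpair.2 : ℕ∞) < k p then 1 else 0 := by
  by_cases hr : n.unpair.1 = p
  · by_cases hj : (n.unpair.2 : ℕ∞) < k p <;> simp [supernaturalFactor, hr, hp, hj]
  · rw [if_neg fun h => hr h.1, supernaturalFactor]
    split_ifs with h
    · simp [h.1.factorization, hr]
    · simp

theorem tsum_factorization {p : ℕ} (hp : p.Prime) :
    ∑' n, ((supernaturalFactor k n).factorization p : ℕ∞) = k p := by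
  have hsupp : Function.support
      (fun n => ((supernaturalFactor k n).factorization p : ℕ∞)) ⊆ Set.range (Nat.pair p) := by
    intro n hn
    rw [Function.mem_support, factorization_apply k hp] at hn
    have hn1 : n.unpair.1 = p := by by_contra h; simp [h] at hn
    exact ⟨n.unpair.2, by rw [← hn1, Nat.pair_unpair]⟩
  have hinj : Function.Injective (Nat.pair p) := fun i j h => (Nat.pair_eq_pair.1 h).2
  rw [← hinj.tsum_eq hsupp, ← ENat.tsum_ite_natCast_lt (k p)]
  congr! 1 with j
  simp [factorization_apply k hp]

end supernaturalFactor

theorem mul_log_sub_le_log_factorial (m : ℕ) : m * log m - m ≤ log m.factorial := by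
  rcases m.eq_zero_or_pos with rfl | hm
  · simp
  have hm' : (0 : ℝ) < m := by exact_mod_cast hm
  have h := Real.pow_div_factorial_le_exp (m : ℝ) hm'.le m
  rw [div_le_iff₀ (by positivity)] at h
  have := Real.log_le_log (by positivity) h
  rw [Real.log_pow, Real.log_mul (Real.exp_ne_zero _) (by positivity), Real.log_exp] at this
  linarith

theorem le_factorial_sub_two_of_log_le {q r : ℕ} (hq : 4 ≤ q) (hr : 0 < r)
    (h : log r ≤ q * log q - 4 * q + 6) : r ≤ (q - 2).factorial := by
  have hq' : (4 : ℝ) ≤ q := by exact_mod_cast hq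
  have hcast : ((q - 2 : ℕ) : ℝ) = q - 2 := by push_cast [Nat.cast_sub (by omega : 2 ≤ q)]; ring
  -- `q ≤ e (q - 2)` as soon as `q ≥ 4`, since `e ≥ 2`
  have hlog_sub : log q - 1 ≤ log (q - 2) := by
    have he : (2 : ℝ) ≤ exp 1 := by linarith [Real.add_one_le_exp (1 : ℝ)]
    have := Real.log_le_log (by positivity) (show (q : ℝ) ≤ (q - 2) * exp 1 by nlinarith)
    rw [Real.log_mul (by linarith) (Real.exp_ne_zero 1), Real.log_exp] at this
    linarith
  have hlog_le : log q ≤ q - 1 := Real.log_le_sub_one_of_pos (by positivity)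
  have hfac := mul_log_sub_le_log_factorial (q - 2)
  rw [hcast] at hfac
  have : log r ≤ log (q - 2).factorial := by
    nlinarith [mul_le_mul_of_nonneg_left hlog_sub (by linarith : (0 : ℝ) ≤ q - 2)]
  exact_mod_cast (Real.log_le_log_iff (by exact_mod_cast hr)
    (by exact_mod_cast (q - 2).factorial_pos)).1 this

theorem tendsto_div_of_abs_sub_mul_le {x P : ℕ → ℝ} {α A B : ℝ} (hP : ∀ n, 2 ^ n ≤ P n)
    (hx : ∀ n, |x n - α * P n| ≤ A + B * n) :
    Tendsto (fun n => x n / P n) atTop (𝓝 α) := by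
  have hlim : Tendsto (fun n : ℕ => A * (1 / 2) ^ n + B * (n * (1 / 2) ^ n)) atTop (𝓝 0) := by
    have h1 := tendsto_pow_atTop_nhds_zero_of_lt_one (r := (1 / 2 : ℝ)) (by norm_num) (by norm_num)
    have h2 := tendsto_self_mul_const_pow_of_lt_one (r := (1 / 2 : ℝ)) (by norm_num) (by norm_num)
    simpa using (h1.const_mul A).add (h2.const_mul B)
  refine tendsto_sub_nhds_zero_iff.1 (squeeze_zero_norm (fun n => ?_) hlim)
  have hPpos : 0 < P n := lt_of_lt_of_le (by positivity) (hP n)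
  calc ‖x n / P n - α‖ = |x n - α * P n| / P n := by
        rw [Real.norm_eq_abs, div_sub' hPpos.ne', abs_div, abs_of_pos hPpos, mul_comm (P n)]
    _ ≤ (A + B * n) / 2 ^ n :=
        div_le_div₀ ((abs_nonneg _).trans (hx n)) (hx n) (by positivity) (hP n)
    _ = A * (1 / 2) ^ n + B * (n * (1 / 2) ^ n) := by rw [one_div_pow]; field_simp

theorem log_pow_ceil_div_log_mem_Ico {p : ℕ} (hp : 1 < p) {t : ℝ} (ht : 0 ≤ t) :
    log ((p : ℝ) ^ ⌈t / log p⌉₊) ∈ Set.Ico t (t + log p) := by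
  have hlog : 0 < log p := Real.log_pos (by exact_mod_cast hp)
  rw [Real.log_pow, Set.mem_Ico]
  constructor
  · rw [← div_le_iff₀ hlog]; exact Nat.le_ceil _
  · rw [← lt_div_iff₀ hlog, add_div, div_self hlog.ne']
    exact Nat.ceil_lt_add_one (by positivity)

namespace FactorialGrowthSeq

variable (α : ℝ) (p : ℕ) (m : ℕ → ℕ)

/-- The slack `n + 4 + log p` pays for the factor `m n ≤ n + 1` and for the error terms in
`term_succ_le_factorial`, while staying `O(n)`. -/
noncomputable def nextTerm (n P : ℕ) : ℕ :=
  p ^ ⌈(α * P + (n + 4 + log p)) / log p⌉₊ * m n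

noncomputable def partialProd : ℕ → ℕ
  | 0 => 1
  | n + 1 => partialProd n * nextTerm α p m n (partialProd n)

noncomputable def term (n : ℕ) : ℕ := nextTerm α p m n (partialProd α p m n)

theorem partialProd_succ (n : ℕ) :
    partialProd α p m (n + 1) = partialProd α p m n * term α p m n := rfl

theorem partialProd_eq_prod (n : ℕ) :
    partialProd α p m n = ∏ i ∈ Finset.range n, term α p m i := by
  induction n with
  | zero => rfl
  | succ n ih => rw [Finset.prod_range_succ, ← ih, partialProd_succ]

variable {α p m}

theorem term_pos (hp : 0 < p) (hm : ∀ n, 0 < m n) (n : ℕ) : 0 < term α p m n :=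
  Nat.mul_pos (pow_pos hp _) (hm n)

theorem log_term_mem_Icc (hα : 0 ≤ α) (hp : 1 < p) (hm : ∀ n, 0 < m n) (hm' : ∀ n, m n ≤ n + 1)
    (n : ℕ) :
    log (term α p m n) ∈ Set.Icc (α * partialProd α p m n + (n + 4 + log p))
      (α * partialProd α p m n + (n + 4 + log p) + log p + n) := by
  obtain ⟨hpow_ge, hpow_lt⟩ := log_pow_ceil_div_log_mem_Ico hp
    (t := α * partialProd α p m n + (n + 4 + log p)) (by positivity)
  have hmpos : (0 : ℝ) < m n := by exact_mod_cast hm n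
  have hlogm : log (m n) ≤ n := by
    have : (m n : ℝ) ≤ n + 1 := by exact_mod_cast hm' n
    linarith [Real.log_le_sub_one_of_pos hmpos]
  have hlog : log (term α p m n) =
      log ((p : ℝ) ^ ⌈(α * partialProd α p m n + (n + 4 + log p)) / log p⌉₊) + log (m n) := by
    rw [term, nextTerm, Nat.cast_mul, Nat.cast_pow, Real.log_mul (by positivity) hmpos.ne']
  rw [hlog, Set.mem_Icc]
  constructor <;> linarith [Real.log_natCast_nonneg (m n)]

section

variable (hα : 0 ≤ α) (hp : 1 < p) (hm : ∀ n, 0 < m n) (hm' : ∀ n, m n ≤ n + 1)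
include hα hp hm hm'

theorem four_le_term (n : ℕ) : 4 ≤ term α p m n := by
  have hlow := (log_term_mem_Icc hα hp hm hm' n).1
  have h4 : log 4 < log (term α p m n) := by
    have : (0 : ℝ) ≤ α * partialProd α p m n := by positivity
    linarith [Real.log_le_sub_one_of_pos (four_pos : (0 : ℝ) < 4), Real.log_natCast_nonneg p]
  exact_mod_cast ((Real.log_lt_log_iff (by norm_num)
    (by exact_mod_cast term_pos (zero_lt_one.trans hp) hm n)).1 h4).le

theorem term_succ_le_factorial (n : ℕ) :
    term α p m (n + 1) ≤ (term α p m n - 2).factorial := by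
  have hq := four_le_term hα hp hm hm' n
  have hlow := (log_term_mem_Icc hα hp hm hm' n).1
  have hup := (log_term_mem_Icc hα hp hm hm' (n + 1)).2
  refine le_factorial_sub_two_of_log_le hq (term_pos (zero_lt_one.trans hp) hm _) ?_
  rw [partialProd_succ] at hup
  push_cast at hup
  have hq' : (4 : ℝ) ≤ term α p m n := by exact_mod_cast hq
  have hlogp : 0 ≤ log p := Real.log_natCast_nonneg p
  -- `α P_{n+1} ≤ (log q_n - n - 4 - log p) q_n`; the rest is `(n + log p)(q_n - 2) ≥ 0`
  nlinarith [mul_le_mul_of_nonneg_right hlow (by linarith : (0 : ℝ) ≤ term α p m n),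
    mul_nonneg (by positivity : (0 : ℝ) ≤ n + log p) (by linarith : (0 : ℝ) ≤ term α p m n - 2)]

theorem two_pow_le_partialProd (n : ℕ) : 2 ^ n ≤ partialProd α p m n := by
  induction n with
  | zero => rfl
  | succ n ih =>
    rw [pow_succ, partialProd_succ]
    exact Nat.mul_le_mul ih ((four_le_term hα hp hm hm' n).trans' (by norm_num))

theorem tendsto_log_term_div_partialProd :
    Tendsto (fun n => log (term α p m n) / partialProd α p m n) atTop (𝓝 α) := by
  refine tendsto_div_of_abs_sub_mul_le (A := 4 + 2 * log p) (B := 2) (fun n => ?_) (fun n => ?_)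
  · exact_mod_cast two_pow_le_partialProd hα hp hm hm' n
  · obtain ⟨hlow, hup⟩ := log_term_mem_Icc hα hp hm hm' n
    have hlogp : 0 ≤ log p := Real.log_natCast_nonneg p
    rw [abs_le]; constructor <;> linarith

end

theorem factorization_term_of_ne (hp : p.Prime) (hm : ∀ n, 0 < m n) {r : ℕ} (hr : r ≠ p) (n : ℕ) :
    (term α p m n).factorization r = (m n).factorization r := by
  rw [term, nextTerm, Nat.factorization_mul (pow_ne_zero _ hp.ne_zero) (hm n).ne',
    hp.factorization_pow, Finsupp.add_apply, Finsupp.single_eq_of_ne hr, zero_add]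

theorem one_le_factorization_term (hα : 0 ≤ α) (hp : p.Prime) (hm : ∀ n, 0 < m n) (n : ℕ) :
    1 ≤ (term α p m n).factorization p := by
  have hlogp : 0 < log p := Real.log_pos (by exact_mod_cast hp.one_lt)
  refine hp.factorization_pos_of_dvd (term_pos hp.pos hm n).ne'
    (Dvd.dvd.mul_right (dvd_pow_self p (Nat.ceil_pos.2 (div_pos ?_ hlogp)).ne') _)
  positivity

end FactorialGrowthSeq

open FactorialGrowthSeq in
/-- Given `α > 0` and a supernatural number `∏ p^{k_p}` with `k_{p⋆} = ∞` for some
prime `p⋆`, there is a sequence `(q_n)` of integers ≥ 2 with `q_{n+1} ≤ (q_n−2)!`,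
`(log q_n)/(q_0⋯q_{n−1}) → α`, and `∑_n ν_p(q_n) = k_p` for every prime `p`. -/
theorem stmt13 (α : ℝ) (hα : 0 < α) (k : ℕ → ℕ∞)
    (hstar : ∃ p : ℕ, p.Prime ∧ k p = ⊤) :
    ∃ q : ℕ → ℕ, (∀ n, 2 ≤ q n) ∧
      (∀ n, q (n + 1) ≤ Nat.factorial (q n - 2)) ∧
      Tendsto (fun n => Real.log (q n) / ∏ i ∈ Finset.range n, (q i : ℝ))
        atTop (nhds α) ∧
      ∀ p : ℕ, p.Prime → ∑' n : ℕ, (((q n).factorization p : ℕ∞)) = k p := by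
  obtain ⟨p, hp, hkp⟩ := hstar
  have hm := supernaturalFactor.pos k
  have hm' := supernaturalFactor.le_succ k
  refine ⟨term α p (supernaturalFactor k),
    fun n => (four_le_term hα.le hp.one_lt hm hm' n).trans' (by norm_num),
    term_succ_le_factorial hα.le hp.one_lt hm hm', ?_, fun r hr => ?_⟩
  · simpa only [partialProd_eq_prod, Nat.cast_prod] using
      tendsto_log_term_div_partialProd hα.le hp.one_lt hm hm'
  · rcases eq_or_ne r p with rfl | hrp
    · rw [hkp]
      exact ENat.tsum_eq_top_of_one_le fun n => by
        exact_mod_cast one_le_factorization_term hα.le hr hm n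
    · simp_rw [factorization_term_of_ne hp hm hrp]
      exact supernaturalFactor.tsum_factorization k hr
end

section
/- Define sequences by q̃_n = 2^{n+10}, q_n = (q̃_n)^{2q̃_{n+1}+3}, h_0 = 1, h_{n+1} = q_n h_n, and write h_n = 2^{S_n}. Then S_n = ∑_{i=1}^{n}(i+9)(2^{i+11}+3), and for every real p with 0 < p < 1/2, the series ∑_n (h_n)^p / h_{n−1} converges. -/
/-!
Since `q_n = 2^{(n+10)(2^{n+12}+3)}`, the exponents satisfy
`S_{n+1} = S_n + (n+10)(2^{n+12}+3)`, and induction gives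
`(n+8) 2^{n+12} - 2^15 ≤ S_n ≤ (n+9) 2^{n+12}`. Hence `p S_{n+1} ≤ 2p(n+10) 2^{n+12}`
drops below `S_n - n` as soon as `(1-2p)(n+10) ≥ 4`, so the terms
`h_{n+1}^p / h_n = 2^{p S_{n+1} - S_n}` are eventually dominated by `2^{-n}`.
-/

open Filter

def feldmanExponent (n : ℕ) : ℕ := ∑ i ∈ Finset.Icc 1 n, (i + 9) * (2 ^ (i + 11) + 3)

@[simp]
lemma feldmanExponent_zero : feldmanExponent 0 = 0 := rfl

lemma feldmanExponent_succ (n : ℕ) :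
    feldmanExponent (n + 1) = feldmanExponent n + (n + 10) * (2 ^ (n + 12) + 3) := by
  rw [feldmanExponent, feldmanExponent, Finset.sum_Icc_succ_top (by omega)]

lemma feldmanExponent_le (n : ℕ) : feldmanExponent n ≤ (n + 9) * 2 ^ (n + 12) := by
  induction n with
  | zero => simp
  | succ n ih =>
    have hlin : n + 10 < 2 ^ (n + 10) := (n + 10).lt_two_pow_self
    rw [feldmanExponent_succ, show 2 ^ (n + 1 + 12) = 8 * 2 ^ (n + 10) by ring,
      show 2 ^ (n + 12) = 4 * 2 ^ (n + 10) by ring] at *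
    nlinarith

lemma le_feldmanExponent_add (n : ℕ) : (n + 8) * 2 ^ (n + 12) ≤ feldmanExponent n + 2 ^ 15 := by
  induction n with
  | zero => simp
  | succ n ih =>
    have hsplit : (n + 1 + 8) * 2 ^ (n + 1 + 12)
        = (n + 8) * 2 ^ (n + 12) + (n + 10) * 2 ^ (n + 12) := by ring
    rw [hsplit, feldmanExponent_succ]
    nlinarith

lemma summable_two_rpow_of_eventually_le_neg {e : ℕ → ℝ} (he : ∀ᶠ n in atTop, e n ≤ -n) :
    Summable fun n => (2 : ℝ) ^ e n := by
  refine .of_norm_bounded_eventually_nat summable_geometric_two ?_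
  filter_upwards [he] with n hn
  rw [Real.norm_of_nonneg (by positivity), ← Real.rpow_natCast, one_div,
    Real.inv_rpow zero_le_two, ← Real.rpow_neg zero_le_two]
  exact Real.rpow_le_rpow_of_exponent_le (by norm_num) hn

lemma eventually_mul_feldmanExponent_succ_le {p : ℝ} (hp : 0 ≤ p) (hp2 : p < 1 / 2) :
    ∀ᶠ n : ℕ in atTop, p * feldmanExponent (n + 1) ≤ feldmanExponent n - n := by
  obtain ⟨N, hN⟩ := exists_nat_ge (4 / (1 - 2 * p))
  filter_upwards [eventually_ge_atTop (N + 3)] with n hn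
  have hup : (feldmanExponent (n + 1) : ℝ) ≤ (n + 10) * (2 * 2 ^ (n + 12)) := by
    have := feldmanExponent_le (n + 1)
    rw [show 2 ^ (n + 1 + 12) = 2 * 2 ^ (n + 12) by ring, add_assoc n 1 9] at this
    exact_mod_cast this
  have hlow : (n + 8) * (2 : ℝ) ^ (n + 12) ≤ feldmanExponent n + 2 ^ 15 := by
    exact_mod_cast le_feldmanExponent_add n
  have hx15 : (2 : ℝ) ^ 15 ≤ 2 ^ (n + 12) := pow_le_pow_right₀ (by norm_num) (by omega)
  have hxn : (n : ℝ) ≤ 2 ^ (n + 12) := by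
    exact_mod_cast (n.lt_two_pow_self.trans (Nat.pow_lt_pow_right (by norm_num) (by omega))).le
  have hc : 2 ≤ n + 8 - 2 * p * (n + 10) := by
    have hNn : (N : ℝ) ≤ n := by exact_mod_cast (by omega : N ≤ n)
    have := (div_le_iff₀ (by linarith : (0 : ℝ) < 1 - 2 * p)).mp (hN.trans hNn)
    nlinarith
  generalize (2 : ℝ) ^ (n + 12) = x at *
  calc p * (feldmanExponent (n + 1) : ℝ) ≤ p * ((n + 10) * (2 * x)) := by gcongr
    _ = (n + 8) * x - (n + 8 - 2 * p * (n + 10)) * x := by ring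
    _ ≤ (n + 8) * x - 2 * x := by gcongr
    _ ≤ feldmanExponent n - n := by linarith

lemma eq_two_pow_feldmanExponent (qt q h : ℕ → ℕ) (hqt : ∀ n, qt n = 2 ^ (n + 10))
    (hq : ∀ n, q n = qt n ^ (2 * qt (n + 1) + 3)) (h0 : h 0 = 1)
    (hrec : ∀ n, h (n + 1) = q n * h n) (n : ℕ) : h n = 2 ^ feldmanExponent n := by
  induction n with
  | zero => simp [h0]
  | succ n ih =>
    rw [hrec, ih, hq, hqt, hqt, feldmanExponent_succ, ← pow_mul, ← pow_add]
    ring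

lemma two_pow_rpow_div_two_pow (a b : ℕ) (p : ℝ) :
    ((2 ^ a : ℕ) : ℝ) ^ p / ((2 ^ b : ℕ) : ℝ) = (2 : ℝ) ^ (p * a - b) := by
  push_cast
  rw [Real.rpow_sub two_pos, mul_comm p, Real.rpow_mul two_pos.le, Real.rpow_natCast,
    Real.rpow_natCast]

/-- Growth estimate in Feldman's construction: with `q̃_n = 2^{n+10}`,
`q_n = q̃_n^{2q̃_{n+1}+3}` and `h_{n+1} = q_n h_n`, one has `h_n = 2^{S_n}` with
`S_n = ∑_{i=1}^n (i+9)(2^{i+11}+3)`, and `∑ (h_n)^p / h_{n−1} < ∞` for `0 < p < 1/2`. -/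
theorem stmt15 (qt q h : ℕ → ℕ) (S : ℕ → ℕ)
    (hqt : ∀ n, qt n = 2 ^ (n + 10))
    (hq : ∀ n, q n = qt n ^ (2 * qt (n + 1) + 3))
    (h0 : h 0 = 1) (hrec : ∀ n, h (n + 1) = q n * h n)
    (hSdef : ∀ n, S n = ∑ i ∈ Finset.Icc 1 n, (i + 9) * (2 ^ (i + 11) + 3)) :
    (∀ n, h n = 2 ^ S n) ∧
      ∀ p : ℝ, 0 < p → p < 1 / 2 →
        Summable (fun n => ((h (n + 1) : ℝ)) ^ p / (h n : ℝ)) := by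
  obtain rfl : S = feldmanExponent := funext hSdef
  have hh := eq_two_pow_feldmanExponent qt q h hqt hq h0 hrec
  refine ⟨hh, fun p hp hp2 => ?_⟩
  simp_rw [hh, two_pow_rpow_div_two_pow]
  refine summable_two_rpow_of_eventually_le_neg ?_
  filter_upwards [eventually_mul_feldmanExponent_succ_le hp.le hp2] with n hn
  linarith
end

section
/- Let X = ∏_{n≥0}{0,…,q_n−1} with q_n ≥ 2, let S be the odometer on X, and let T be the odomutant associated to families of permutations σ^{(n)}_i of {0,…,q_n−1} (0 ≤ i < q_{n+1}) all of which fix 0 and q_n − 1. Then T extends uniquely to a homeomorphism of X, T has the same orbits as S at every point of X, and the associated cocycles c_S, c_T : X → ℤ are continuous on X \ {x⁺}, where x⁺ = (q_0−1, q_1−1, …). In particular S and T are strongly orbit equivalent. -/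
noncomputable section

/-- The finite distortion `ψ_n`, applying `σ^{(k)}_{x_{k+1}}` to the `k`-th
coordinate for `k ≤ n`. -/
def psiN (q : ℕ → ℕ) (σ : ∀ n, Fin (q (n + 1)) → Equiv.Perm (Fin (q n))) (n : ℕ)
    (x : ∀ k, Fin (q k)) : ∀ k, Fin (q k) :=
  fun k => if k ≤ n then σ k (x (k + 1)) (x k) else x k

/-- The full distortion `ψ`, applying `σ^{(k)}_{x_{k+1}}` to every coordinate. -/
def psiInf (q : ℕ → ℕ) (σ : ∀ n, Fin (q (n + 1)) → Equiv.Perm (Fin (q n)))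
    (x : ∀ k, Fin (q k)) : ∀ k, Fin (q k) :=
  fun k => σ k (x (k + 1)) (x k)

/-- The maximal point `x⁺ = (q_0−1, q_1−1, …)`. -/
def xMax (q : ℕ → ℕ) (hq : ∀ n, 2 ≤ q n) : ∀ n, Fin (q n) :=
  fun n => ⟨q n - 1, by have := hq n; omega⟩

/-- The minimal point `x⁻ = (0, 0, …)`. -/
def xMin (q : ℕ → ℕ) (hq : ∀ n, 2 ≤ q n) : ∀ n, Fin (q n) :=
  fun n => ⟨0, by have := hq n; omega⟩


/-!
Both `S` and `T` are adic maps: the `k`-th digit moves exactly when all earlier digits are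
maximal, by `a ↦ a + 1` for `S` and by `a ↦ σ⁻¹ (σ a + 1)` for `T` (with `σ = σ^{(k)}_{x_{k+1}}`),
cyclically in `Fin (q k)`. Since every `σ` fixes `0` and `q k - 1`, a maximal digit becomes `0`
whatever the next digit is, so the carry can be undone and `T` is invertible; coordinate `k` of
`T x` only depends on the digits up to `k + 1`, so `T` and `T⁻¹` are continuous.

Fix `x ≠ x⁺` with first non-maximal digit `i`. On the finite block `{y | y k = x k for k > i}`,
read the first `i + 1` digits in mixed radix, either as they are or through the `σ`'s: `S` adds
one to the first reading and `T` to the second. Hence `S x = T ^ c x` and `T x = S ^ c' x` with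
`c`, `c'` differences of readings, which only depend on finitely many digits of `x`. The same
count gives `ψ_n T = S ψ_n`, as `ψ_n` turns the second reading into the first.
-/

open Equiv PiNat Filter Topology

section Cylinder

variable {E : ℕ → Type*}

theorem PiNat.ne_and_firstDiff_eq_of_mem_cylinder {x y z : ∀ n, E n} (hxz : x ≠ z)
    (hy : y ∈ cylinder x (firstDiff x z + 1)) : y ≠ z ∧ firstDiff y z = firstDiff x z := by
  have hyx : y (firstDiff x z) = x (firstDiff x z) := hy _ (Nat.lt_succ_self _)
  have hyz : y ≠ z := fun h => apply_firstDiff_ne hxz (h ▸ hyx).symm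
  refine ⟨hyz, le_antisymm (not_lt.1 fun h => ?_) ?_⟩
  · exact apply_firstDiff_ne hxz (hyx.symm.trans (apply_eq_of_lt_firstDiff h))
  · rw [← mem_cylinder_iff_le_firstDiff hyz]
    exact fun i hi => (hy i (by omega)).trans (mem_cylinder_firstDiff x z i hi)

variable [∀ n, TopologicalSpace (E n)] [∀ n, DiscreteTopology (E n)]

theorem PiNat.cylinder_mem_nhds (x : ∀ n, E n) (n : ℕ) : cylinder x n ∈ 𝓝 x :=
  (isOpen_cylinder E x n).mem_nhds (self_mem_cylinder x n)

theorem PiNat.continuous_of_mapsTo_cylinder {f : (∀ n, E n) → ∀ n, E n}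
    (hf : ∀ x n, Set.MapsTo f (cylinder x (n + 1)) (cylinder (f x) n)) : Continuous f :=
  continuous_pi fun k => continuous_iff_continuousAt.2 fun x =>
    continuousAt_const.congr <| mem_of_superset (cylinder_mem_nhds x (k + 2)) fun _ hy =>
      (hf x (k + 1) hy k k.lt_succ_self).symm

end Cylinder

theorem Equiv.Perm.SameCycle.of_forall_sameCycle_apply {α : Type*} {f g : Perm α}
    (h : ∀ x, g.SameCycle x (f x)) {x y : α} (hxy : f.SameCycle x y) : g.SameCycle x y := by
  obtain ⟨m, rfl⟩ := hxy
  induction m using Int.induction_on with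
  | zero => exact .rfl
  | succ m ih =>
    rw [zpow_add_one, ← (Commute.self_zpow f _).eq, Perm.mul_apply]
    exact ih.trans (h _)
  | pred m ih =>
    rw [zpow_sub_one, ← (Commute.self_zpow f _).inv_left.eq, Perm.mul_apply]
    refine ih.trans ?_
    simpa using (h (f⁻¹ ((f ^ (-(m : ℤ))) x))).symm

theorem Equiv.Perm.zpow_sub_apply_eq_of_injOn {α : Type*} (R : Perm α) {B : Set α}
    {r : α → ℕ} (hr : B.InjOn r)
    (hR : ∀ y ∈ B, ∀ z ∈ B, r y < r z → R y ∈ B ∧ r (R y) = r y + 1)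
    {y z : α} (hy : y ∈ B) (hz : z ∈ B) : (R ^ ((r z : ℤ) - r y)) y = z := by
  have climb : ∀ y ∈ B, ∀ z ∈ B, r y ≤ r z → (R ^ (r z - r y)) y = z := by
    intro y hy z hz hyz
    have orbit : ∀ j ≤ r z - r y, (R ^ j) y ∈ B ∧ r ((R ^ j) y) = r y + j := by
      intro j
      induction j with
      | zero => exact fun _ => ⟨hy, rfl⟩
      | succ j ih =>
        intro hj
        obtain ⟨hB, hrj⟩ := ih (by omega)
        obtain ⟨hB', hr'⟩ := hR _ hB z hz (by omega)
        rw [pow_succ', Perm.mul_apply]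
        exact ⟨hB', by omega⟩
    obtain ⟨hB, hrank⟩ := orbit _ le_rfl
    exact hr hB hz (by omega)
  rcases le_total (r y) (r z) with h | h
  · rw [show (r z : ℤ) - r y = ((r z - r y : ℕ) : ℤ) by omega, zpow_natCast]
    exact climb y hy z hz h
  · rw [show (r z : ℤ) - r y = -((r y - r z : ℕ) : ℤ) by omega, zpow_neg, zpow_natCast,
      Perm.inv_eq_iff_eq]
    exact (climb z hz y hy h).symm

theorem Fin.val_finRotate {n : ℕ} (a : Fin n) :
    (finRotate n a : ℕ) = if (a : ℕ) + 1 = n then 0 else (a : ℕ) + 1 := by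
  cases n with
  | zero => exact a.elim0
  | succ n => rw [coe_finRotate]; simp [Fin.ext_iff]

theorem Finset.sum_range_mul_prod_carry (q : ℕ → ℕ) (a b : ℕ → ℤ) {i n : ℕ} (hin : i < n)
    (ha : ∀ k < i, a k = q k - 1) (hb : ∀ k < i, b k = 0) (hi : b i = a i + 1)
    (hab : ∀ k, i < k → b k = a k) :
    ∑ k ∈ range n, b k * ∏ j ∈ range k, (q j : ℤ)
      = ∑ k ∈ range n, a k * ∏ j ∈ range k, (q j : ℤ) + 1 := by
  set Q : ℕ → ℤ := fun k => ∏ j ∈ range k, (q j : ℤ)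
  obtain ⟨m, rfl⟩ : ∃ m, n = i + 1 + m := ⟨n - (i + 1), by omega⟩
  rw [← sub_eq_iff_eq_add', ← sum_sub_distrib, sum_range_add, sum_range_succ]
  have below : ∑ k ∈ range i, (b k * Q k - a k * Q k) = ∑ k ∈ range i, (Q k - Q (k + 1)) :=
    sum_congr rfl fun k hk => by
      rw [ha k (mem_range.1 hk), hb k (mem_range.1 hk)]
      simp only [Q, prod_range_succ]
      ring
  have above : ∑ k ∈ range m, (b (i + 1 + k) * Q (i + 1 + k) - a (i + 1 + k) * Q (i + 1 + k))
      = 0 :=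
    sum_eq_zero fun k _ => by rw [hab _ (by omega), sub_self]
  rw [below, above, sum_range_sub', hi]
  simp [Q]
  ring

section Adic

variable {q : ℕ → ℕ}

open scoped Classical in
/-- An odometer-type map in which the carry propagates through the digits of `L`. -/
def adicMap (τ : ∀ k, Fin (q (k + 1)) → Perm (Fin (q k))) (L x : ∀ k, Fin (q k)) :
    ∀ k, Fin (q k) :=
  fun k => if x ∈ cylinder L k then τ k (x (k + 1)) (x k) else x k

variable (τ : ∀ k, Fin (q (k + 1)) → Perm (Fin (q k))) {L F : ∀ k, Fin (q k)}

theorem adicMap_of_mem {x : ∀ k, Fin (q k)} {k : ℕ} (h : x ∈ cylinder L k) :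
    adicMap τ L x k = τ k (x (k + 1)) (x k) :=
  if_pos h

theorem adicMap_of_not_mem {x : ∀ k, Fin (q k)} {k : ℕ} (h : x ∉ cylinder L k) :
    adicMap τ L x k = x k :=
  if_neg h

theorem adicMap_of_ne {x : ∀ k, Fin (q k)} {i k : ℕ} (hi : x i ≠ L i) (hik : i < k) :
    adicMap τ L x k = x k :=
  adicMap_of_not_mem τ fun h => hi (h i hik)

theorem adicMap_mem_cylinder_iff (hF : ∀ k c, τ k c (L k) = F k) {x : ∀ k, Fin (q k)} {n : ℕ} :
    adicMap τ L x ∈ cylinder F n ↔ x ∈ cylinder L n := by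
  refine ⟨fun h => ?_, fun h k hk => ?_⟩
  · induction n with
    | zero => exact fun _ h => absurd h (Nat.not_lt_zero _)
    | succ n ih =>
      have hn := ih (cylinder_anti _ n.le_succ h)
      intro k hk
      rcases Nat.lt_succ_iff_lt_or_eq.1 hk with hk | rfl
      · exact hn k hk
      · exact (τ k (x (k + 1))).injective <| by rw [hF, ← adicMap_of_mem τ hn]; exact h k hk
  · rw [adicMap_of_mem τ (cylinder_anti _ hk.le h), h k hk, hF]

theorem adicMap_symm_adicMap (hF : ∀ k c, τ k c (L k) = F k) (x : ∀ k, Fin (q k)) :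
    adicMap (fun k c => (τ k c).symm) F (adicMap τ L x) = x := by
  funext k
  by_cases hx : x ∈ cylinder L k
  · rw [adicMap_of_mem _ ((adicMap_mem_cylinder_iff τ hF).2 hx), adicMap_of_mem τ hx]
    by_cases hxk : x k = L k
    -- the carry may have changed the next digit, but every `τ k c` sends `L k` to `F k`
    · rw [hxk, hF, symm_apply_eq, hF]
    · rw [adicMap_of_ne τ hxk k.lt_succ_self, symm_apply_apply]
  · rw [adicMap_of_not_mem _ (mt (adicMap_mem_cylinder_iff τ hF).1 hx), adicMap_of_not_mem τ hx]

variable (L F) in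
def adicPerm (hF : ∀ k c, τ k c (L k) = F k) : Perm (∀ k, Fin (q k)) where
  toFun := adicMap τ L
  invFun := adicMap (fun k c => (τ k c).symm) F
  left_inv := adicMap_symm_adicMap τ hF
  right_inv := adicMap_symm_adicMap (fun k c => (τ k c).symm) fun k c => by rw [symm_apply_eq, hF]

variable (L) in
theorem mapsTo_adicMap_cylinder (x : ∀ k, Fin (q k)) (n : ℕ) :
    Set.MapsTo (adicMap τ L) (cylinder x (n + 1)) (cylinder (adicMap τ L x) n) := by
  intro y hy k hk
  have hL : y ∈ cylinder L k ↔ x ∈ cylinder L k :=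
    forall₂_congr fun j hj => by rw [hy j (by omega)]
  by_cases hx : x ∈ cylinder L k
  · rw [adicMap_of_mem τ hx, adicMap_of_mem τ (hL.2 hx), hy k (by omega), hy (k + 1) (by omega)]
  · rw [adicMap_of_not_mem τ hx, adicMap_of_not_mem τ (mt hL.1 hx), hy k (by omega)]

variable (L) in
theorem continuous_adicMap : Continuous (adicMap τ L) :=
  continuous_of_mapsTo_cylinder (mapsTo_adicMap_cylinder τ L)

theorem continuous_adicPerm (hF : ∀ k c, τ k c (L k) = F k) : Continuous (adicPerm τ L F hF) :=
  continuous_adicMap τ L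

theorem continuous_adicPerm_symm (hF : ∀ k c, τ k c (L k) = F k) :
    Continuous (adicPerm τ L F hF).symm :=
  continuous_adicMap (fun k c => (τ k c).symm) F

end Adic

section BlockRank

variable {q : ℕ → ℕ} (ρ : ∀ k, Fin (q (k + 1)) → Perm (Fin (q k)))

def blockRank (n : ℕ) (y : ∀ k, Fin (q k)) : ℕ :=
  finPiFinEquiv fun k : Fin n => ρ k (y (k + 1)) (y k)

theorem blockRank_eq_sum (n : ℕ) (y : ∀ k, Fin (q k)) :
    (blockRank ρ n y : ℤ) =
      ∑ k ∈ Finset.range n, (ρ k (y (k + 1)) (y k) : ℤ) * ∏ j ∈ Finset.range k, (q j : ℤ) := by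
  rw [blockRank, finPiFinEquiv_apply, ← Fin.sum_univ_eq_sum_range]
  push_cast
  simp [Fin.prod_univ_eq_prod_range (fun j => (q j : ℤ))]

theorem blockRank_eq_of_mem_cylinder {n : ℕ} {x y : ∀ k, Fin (q k)}
    (h : y ∈ cylinder x (n + 1)) : blockRank ρ n y = blockRank ρ n x := by
  unfold blockRank
  congr 2
  funext k
  rw [h k (by omega), h (k + 1) (by omega)]

theorem blockRank_injOn (n : ℕ) (x : ∀ k, Fin (q k)) :
    Set.InjOn (blockRank ρ n) {y | ∀ k, n ≤ k → y k = x k} := by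
  intro y hy z hz h
  have hdigits := congrFun (finPiFinEquiv.injective (Fin.ext h))
  have descend : ∀ d k, n ≤ k + d → y k = z k := by
    intro d
    induction d with
    | zero => exact fun k hk => (hy k hk).trans (hz k hk).symm
    | succ d ih =>
      intro k hk
      by_cases hnk : n ≤ k
      · exact (hy k hnk).trans (hz k hnk).symm
      · have hk' := hdigits ⟨k, by omega⟩
        simp only [ih (k + 1) (by omega)] at hk'
        exact (ρ k _).injective hk'
  exact funext fun k => descend n k (by omega)

theorem blockRank_le_of_mem_cylinder (hq : ∀ n, 2 ≤ q n)
    (hρmax : ∀ k c, ρ k c (xMax q hq k) = xMax q hq k) {n : ℕ} {y : ∀ k, Fin (q k)}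
    (hy : y ∈ cylinder (xMax q hq) n) (z : ∀ k, Fin (q k)) :
    blockRank ρ n z ≤ blockRank ρ n y := by
  zify
  rw [blockRank_eq_sum, blockRank_eq_sum]
  refine Finset.sum_le_sum fun k hk => mul_le_mul_of_nonneg_right ?_ (by positivity)
  rw [hy k (Finset.mem_range.1 hk), hρmax]
  exact_mod_cast Nat.le_sub_one_of_lt (Fin.isLt _)

end BlockRank

section Odomutant

variable {q : ℕ → ℕ} (hq : ∀ n, 2 ≤ q n)

theorem finRotate_xMax (k : ℕ) : finRotate (q k) (xMax q hq k) = xMin q hq k :=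
  Fin.ext <| by rw [Fin.val_finRotate, if_pos (by have := hq k; simp only [xMax]; omega)]; rfl

theorem val_finRotate_of_ne_xMax {k : ℕ} {a : Fin (q k)} (ha : a ≠ xMax q hq k) :
    (finRotate (q k) a : ℕ) = a + 1 := by
  rw [Fin.val_finRotate, if_neg fun h => ha (Fin.ext (by simp only [xMax]; omega))]

/-- The cyclic successor on `Fin (q k)` for the order in which `a` has rank `ρ k c a`. -/
def conjRotate (ρ : ∀ k, Fin (q (k + 1)) → Perm (Fin (q k))) (k : ℕ) (c : Fin (q (k + 1))) :
    Perm (Fin (q k)) :=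
  (ρ k c).trans ((finRotate (q k)).trans (ρ k c).symm)

variable (ρ : ∀ k, Fin (q (k + 1)) → Perm (Fin (q k)))

theorem conjRotate_xMax (hρ0 : ∀ k c, ρ k c (xMin q hq k) = xMin q hq k)
    (hρmax : ∀ k c, ρ k c (xMax q hq k) = xMax q hq k) (k : ℕ) (c : Fin (q (k + 1))) :
    conjRotate ρ k c (xMax q hq k) = xMin q hq k := by
  rw [conjRotate, trans_apply, trans_apply, hρmax, finRotate_xMax, symm_apply_eq, hρ0]

variable (hρ0 : ∀ k c, ρ k c (xMin q hq k) = xMin q hq k)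
  (hρmax : ∀ k c, ρ k c (xMax q hq k) = xMax q hq k)

/-- The paper's `T = ψ_n⁻¹ ∘ S ∘ ψ_n` for `σ = ρ`: `ψ_n` replaces each digit by its rank, and `S`
adds one to the rank of the first non-maximal digit. -/
def odomutant : Perm (∀ k, Fin (q k)) :=
  adicPerm (conjRotate ρ) (xMax q hq) (xMin q hq) (conjRotate_xMax hq ρ hρ0 hρmax)

theorem one_apply_self (L : ∀ k, Fin (q k)) (k : ℕ) (c : Fin (q (k + 1))) :
    (1 : ∀ k, Fin (q (k + 1)) → Perm (Fin (q k))) k c (L k) = L k :=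
  rfl

def odometer : Perm (∀ k, Fin (q k)) :=
  odomutant hq 1 (one_apply_self _) (one_apply_self _)

variable {ρ}

theorem odomutant_apply (x : ∀ k, Fin (q k)) :
    odomutant hq ρ hρ0 hρmax x = adicMap (conjRotate ρ) (xMax q hq) x :=
  rfl

theorem odomutant_xMax : odomutant hq ρ hρ0 hρmax (xMax q hq) = xMin q hq :=
  funext fun k => by
    rw [odomutant_apply, adicMap_of_mem _ (self_mem_cylinder _ k), conjRotate_xMax hq ρ hρ0 hρmax]

variable {x : ∀ k, Fin (q k)} {k n : ℕ}

theorem odomutant_apply_of_lt_firstDiff (hk : k < firstDiff x (xMax q hq)) :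
    odomutant hq ρ hρ0 hρmax x k = xMin q hq k :=
  (adicMap_mem_cylinder_iff _ (conjRotate_xMax hq ρ hρ0 hρmax)).2 (mem_cylinder_firstDiff _ _) k hk

theorem odomutant_apply_of_firstDiff_lt (hx : x ≠ xMax q hq)
    (hk : firstDiff x (xMax q hq) < k) : odomutant hq ρ hρ0 hρmax x k = x k :=
  adicMap_of_ne _ (apply_firstDiff_ne hx) hk

theorem odomutant_apply_of_not_mem_cylinder (hx : x ∉ cylinder (xMax q hq) n) (hk : n ≤ k) :
    odomutant hq ρ hρ0 hρmax x k = x k := by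
  obtain ⟨i, hi, hxi⟩ : ∃ i < n, x i ≠ xMax q hq i := by simpa [cylinder] using hx
  exact adicMap_of_ne _ hxi (by omega)

theorem val_rank_odomutant_firstDiff (hx : x ≠ xMax q hq) {i : ℕ}
    (hi : firstDiff x (xMax q hq) = i) :
    (ρ i (odomutant hq ρ hρ0 hρmax x (i + 1)) (odomutant hq ρ hρ0 hρmax x i) : ℕ)
      = ρ i (x (i + 1)) (x i) + 1 := by
  subst hi
  set i := firstDiff x (xMax q hq)
  have hρx : ρ i (x (i + 1)) (x i) ≠ xMax q hq i := by
    rw [← hρmax i (x (i + 1))]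
    exact (ρ i _).injective.ne (apply_firstDiff_ne hx)
  rw [odomutant_apply_of_firstDiff_lt hq hρ0 hρmax hx i.lt_succ_self, odomutant_apply,
    adicMap_of_mem _ (mem_cylinder_firstDiff x _), conjRotate, trans_apply, trans_apply,
    apply_symm_apply, val_finRotate_of_ne_xMax hq hρx]

theorem blockRank_odomutant {y : ∀ k, Fin (q k)} (hy : y ∉ cylinder (xMax q hq) n) :
    blockRank ρ n (odomutant hq ρ hρ0 hρmax y) = blockRank ρ n y + 1 := by
  have hne : y ≠ xMax q hq := by rintro rfl; exact hy (self_mem_cylinder _ n)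
  have hlt : firstDiff y (xMax q hq) < n := by
    by_contra! h
    exact hy ((mem_cylinder_iff_le_firstDiff hne n).2 h)
  zify
  rw [blockRank_eq_sum, blockRank_eq_sum]
  refine Finset.sum_range_mul_prod_carry q _ _ hlt (fun k hk => ?_) (fun k hk => ?_) ?_
    fun k hk => ?_
  · rw [apply_eq_of_lt_firstDiff hk, hρmax]
    simp only [xMax]
    have := hq k
    omega
  · rw [odomutant_apply_of_lt_firstDiff hq hρ0 hρmax hk, hρ0]
    rfl
  · exact_mod_cast val_rank_odomutant_firstDiff hq hρ0 hρmax hne rfl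
  · rw [odomutant_apply_of_firstDiff_lt hq hρ0 hρmax hne hk,
      odomutant_apply_of_firstDiff_lt hq hρ0 hρmax hne (by omega)]

theorem blockRank_one_psiN (n : ℕ) (y : ∀ k, Fin (q k)) :
    blockRank 1 (n + 1) (psiN q ρ n y) = blockRank ρ (n + 1) y := by
  unfold blockRank
  congr 2
  funext k
  simp [psiN, Nat.lt_succ_iff.1 k.isLt]

theorem psiN_odomutant (hx : x ∉ cylinder (xMax q hq) (n + 1)) :
    psiN q ρ n (odomutant hq ρ hρ0 hρmax x) = odometer hq (psiN q ρ n x) := by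
  have hψx : psiN q ρ n x ∉ cylinder (xMax q hq) (n + 1) := fun h => hx fun k hk => by
    have hk' := h k hk
    simp only [psiN, show k ≤ n by omega, if_true] at hk'
    rwa [← hρmax k (x (k + 1)), (ρ k _).injective.eq_iff] at hk'
  have tail : ∀ y k, n + 1 ≤ k → psiN q ρ n y k = y k := fun y k hk => if_neg (by omega)
  refine blockRank_injOn 1 (n + 1) (psiN q ρ n x) (fun k hk => ?_)
    (fun k hk => odomutant_apply_of_not_mem_cylinder hq _ _ hψx hk) ?_
  · rw [tail _ k hk, tail _ k hk, odomutant_apply_of_not_mem_cylinder hq hρ0 hρmax hx hk]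
  · rw [odometer, blockRank_one_psiN, blockRank_odomutant hq hρ0 hρmax hx,
      blockRank_odomutant hq _ _ hψx, blockRank_one_psiN]

theorem eq_odometer (S : Perm (∀ k, Fin (q k)))
    (hS : ∀ (x : ∀ n, Fin (q n)) (i : ℕ),
      (∀ j, j < i → (x j : ℕ) = q j - 1) → (x i : ℕ) ≠ q i - 1 →
        (∀ j, j < i → (S x j : ℕ) = 0) ∧ (S x i : ℕ) = (x i : ℕ) + 1 ∧
          ∀ j, i < j → S x j = x j)
    (hS' : ∀ (x : ∀ n, Fin (q n)), (∀ j, (x j : ℕ) = q j - 1) → ∀ j, (S x j : ℕ) = 0) :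
    S = odometer hq := by
  ext x k
  by_cases hx : x = xMax q hq
  · subst hx
    rw [odometer, odomutant_xMax]
    exact hS' _ (fun _ => rfl) k
  obtain ⟨below, at_i, above⟩ := hS x (firstDiff x (xMax q hq))
    (fun j hj => congrArg Fin.val (apply_eq_of_lt_firstDiff (y := xMax q hq) hj))
    (fun h => apply_firstDiff_ne hx (Fin.ext h))
  rw [odometer]
  rcases lt_trichotomy k (firstDiff x (xMax q hq)) with hk | rfl | hk
  · rw [below k hk, odomutant_apply_of_lt_firstDiff hq _ _ hk]
    rfl
  · rw [at_i]
    exact (val_rank_odomutant_firstDiff hq (one_apply_self _) (one_apply_self _) hx rfl).symm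
  · rw [above k hk, odomutant_apply_of_firstDiff_lt hq _ _ hx hk]

end Odomutant

section Cocycle

variable {q : ℕ → ℕ} (hq : ∀ n, 2 ≤ q n)

open scoped Classical in
/-- On the block of points agreeing with `x` beyond its first non-maximal digit, both odomutants
add one to their own block rank, so the exponent is a difference of `ρ'`-ranks. -/
def odomutantCocycle (ρ ρ' : ∀ k, Fin (q (k + 1)) → Perm (Fin (q k))) (x : ∀ k, Fin (q k)) :
    ℤ :=
  if x = xMax q hq then 1 else
    blockRank ρ' (firstDiff x (xMax q hq) + 1) (adicMap (conjRotate ρ) (xMax q hq) x) -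
      blockRank ρ' (firstDiff x (xMax q hq) + 1) x

variable {ρ ρ' : ∀ k, Fin (q (k + 1)) → Perm (Fin (q k))}
  (hρ0 : ∀ k c, ρ k c (xMin q hq k) = xMin q hq k)
  (hρmax : ∀ k c, ρ k c (xMax q hq k) = xMax q hq k)
  (hρ0' : ∀ k c, ρ' k c (xMin q hq k) = xMin q hq k)
  (hρmax' : ∀ k c, ρ' k c (xMax q hq k) = xMax q hq k)

theorem odomutant_eq_zpow_odomutantCocycle (x : ∀ k, Fin (q k)) :
    odomutant hq ρ hρ0 hρmax x =
      (odomutant hq ρ' hρ0' hρmax' ^ odomutantCocycle hq ρ ρ' x) x := by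
  by_cases hx : x = xMax q hq
  · rw [odomutantCocycle, if_pos hx, zpow_one, hx, odomutant_xMax, odomutant_xMax]
  set n := firstDiff x (xMax q hq) + 1
  have hxn : x ∉ cylinder (xMax q hq) n := fun h =>
    apply_firstDiff_ne hx (h _ (Nat.lt_succ_self _))
  rw [odomutantCocycle, if_neg hx]
  refine ((odomutant hq ρ' hρ0' hρmax').zpow_sub_apply_eq_of_injOn (blockRank_injOn ρ' n x)
    (fun y hy z _ hyz => ?_) (fun _ _ => rfl)
    (fun k hk => odomutant_apply_of_not_mem_cylinder hq hρ0 hρmax hxn hk)).symm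
  have hyn : y ∉ cylinder (xMax q hq) n := fun h =>
    (blockRank_le_of_mem_cylinder ρ' hq hρmax' h z).not_gt hyz
  exact ⟨fun k hk => (odomutant_apply_of_not_mem_cylinder hq hρ0' hρmax' hyn hk).trans (hy k hk),
    blockRank_odomutant hq hρ0' hρmax' hyn⟩

theorem continuousOn_odomutantCocycle :
    ContinuousOn (odomutantCocycle hq ρ ρ') {x | x ≠ xMax q hq} := by
  intro x hx
  set i := firstDiff x (xMax q hq)
  refine (continuousAt_const (y := odomutantCocycle hq ρ ρ' x)).congr ?_ |>.continuousWithinAt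
  filter_upwards [cylinder_mem_nhds x (i + 3)] with y hy
  obtain ⟨hy', hi⟩ := ne_and_firstDiff_eq_of_mem_cylinder hx (cylinder_anti x (by omega) hy)
  rw [odomutantCocycle, odomutantCocycle, if_neg hx, if_neg hy', hi,
    blockRank_eq_of_mem_cylinder ρ' (cylinder_anti x (by omega) hy),
    blockRank_eq_of_mem_cylinder ρ' (mapsTo_adicMap_cylinder _ _ x (i + 2) hy)]

end Cocycle

/-- If all the permutations fix `0` and `q_n − 1`, the odomutant extends to a
homeomorphism of the Cantor set `X` having the same orbits as the odometer `S`
at every point, with cocycles continuous off `x⁺`: `S` and `T` are strongly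
orbit equivalent. -/
theorem stmt16 (q : ℕ → ℕ) (hq : ∀ n, 2 ≤ q n)
    (σ : ∀ n, Fin (q (n + 1)) → Equiv.Perm (Fin (q n)))
    (hσ0 : ∀ n (i : Fin (q (n + 1))) (a : Fin (q n)), (a : ℕ) = 0 → (σ n i a : ℕ) = 0)
    (hσmax : ∀ n (i : Fin (q (n + 1))) (a : Fin (q n)),
      (a : ℕ) = q n - 1 → (σ n i a : ℕ) = q n - 1)
    (S : Equiv.Perm (∀ n, Fin (q n)))
    (hS : ∀ (x : ∀ n, Fin (q n)) (i : ℕ),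
      (∀ j, j < i → (x j : ℕ) = q j - 1) → (x i : ℕ) ≠ q i - 1 →
        (∀ j, j < i → (S x j : ℕ) = 0) ∧ (S x i : ℕ) = (x i : ℕ) + 1 ∧
          ∀ j, i < j → S x j = x j)
    (hS' : ∀ (x : ∀ n, Fin (q n)), (∀ j, (x j : ℕ) = q j - 1) → ∀ j, (S x j : ℕ) = 0) :
    ∃ T : Equiv.Perm (∀ n, Fin (q n)),
      -- T is a homeomorphism of the Cantor set X
      Continuous (⇑T) ∧ Continuous (⇑T.symm) ∧
      -- T is the odomutant: ψ_n(Tx) = S(ψ_n x) for x ≠ x⁺ and n ≥ N⁺(ψ(x))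
      (∀ x, x ≠ xMax q hq →
        ∀ n, (∃ k ≤ n, psiInf q σ x k ≠ xMax q hq k) →
          psiN q σ n (T x) = S (psiN q σ n x)) ∧
      T (xMax q hq) = xMin q hq ∧
      -- T has the same orbits as S at every point of X
      (∀ x, (Set.range fun m : ℤ => (T ^ m) x) = Set.range fun m : ℤ => (S ^ m) x) ∧
      -- the cocycles exist everywhere and are continuous on X \ {x⁺}
      ∃ cS cT : (∀ n, Fin (q n)) → ℤ,
        (∀ x, S x = (T ^ cS x) x) ∧ (∀ x, T x = (S ^ cT x) x) ∧
        ContinuousOn cS {x | x ≠ xMax q hq} ∧ ContinuousOn cT {x | x ≠ xMax q hq} := by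
  have fix0 : ∀ k c, σ k c (xMin q hq k) = xMin q hq k := fun k c => Fin.ext (hσ0 k c _ rfl)
  have fixMax : ∀ k c, σ k c (xMax q hq k) = xMax q hq k := fun k c => Fin.ext (hσmax k c _ rfl)
  obtain rfl := eq_odometer hq S hS hS'
  have hcS := odomutant_eq_zpow_odomutantCocycle hq (one_apply_self _) (one_apply_self _)
    fix0 fixMax
  have hcT := odomutant_eq_zpow_odomutantCocycle hq fix0 fixMax
    (one_apply_self _) (one_apply_self _)
  refine ⟨odomutant hq σ fix0 fixMax, continuous_adicPerm _ _, continuous_adicPerm_symm _ _,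
    fun x _ n hn => psiN_odomutant hq fix0 fixMax ?_, odomutant_xMax hq fix0 fixMax,
    fun x => Set.ext fun y => ⟨?_, ?_⟩, odomutantCocycle hq 1 σ, odomutantCocycle hq σ 1,
    hcS, hcT, continuousOn_odomutantCocycle hq, continuousOn_odomutantCocycle hq⟩
  · obtain ⟨k, hk, hψ⟩ := hn
    exact fun h => hψ (by rw [psiInf, h k (by omega), fixMax])
  · exact Perm.SameCycle.of_forall_sameCycle_apply fun z => ⟨_, (hcT z).symm⟩
  · exact Perm.SameCycle.of_forall_sameCycle_apply fun z => ⟨_, (hcS z).symm⟩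

end
end

section
/- Let T be an odomutant on X = ∏_{n≥0}{0,…,q_n−1} built from the odometer S via permutations σ^{(n)}_i, and let φ : ℝ₊ → ℝ₊ be non-decreasing. If the series ∑_n φ(h_{n+1})/h_n converges, where h_n = q_0⋯q_{n−1}, then the identity map of X is a φ-integrable orbit equivalence between S and T: the cocycles c_S and c_T satisfy ∫_X φ(|c_S|)dμ < ∞ and ∫_X φ(|c_T|)dμ < ∞. -/
/-!
Fix a level `n` and the class of points agreeing with `x` beyond coordinate `n`. On it `S` adds one
to the mixed-radix value `∑_{k ≤ n} y_k h_k`, and `T` adds one to the same value of the distorted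
point `ψ(y)`, as long as no carry leaves the first `n + 1` digits. Both values are injective on the
class and smaller than `h_{n+1}`, so `S x` is reached from `x` by fewer than `h_{n+1}` steps of `T`
once `x_n` is not maximal, and `T x` by fewer than `h_{n+1}` steps of `S` once `ψ(x)_n` is not
maximal. The set where `n` is the first such level has measure at most `1/h_n`, because there the
first `n + 1` coordinates are determined by `x_n`; summing `φ(h_{n+1})/h_n` over `n` bounds both
integrals.
-/

open MeasureTheory

noncomputable section

open Finset

/-- `0, -1, 1, -2, 2, …` -/
def intByAbs (m : ℕ) : ℤ := if m % 2 = 0 then ((m / 2 : ℕ) : ℤ) else -(((m + 1) / 2 : ℕ) : ℤ)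

lemma natAbs_intByAbs (m : ℕ) : (intByAbs m).natAbs = (m + 1) / 2 := by
  unfold intByAbs; split_ifs <;> omega

lemma exists_intByAbs_eq (c : ℤ) : ∃ m, intByAbs m = c ∧ (m + 1) / 2 = c.natAbs := by
  rcases le_or_gt 0 c with hc | hc
  · exact ⟨2 * c.natAbs, by unfold intByAbs; split_ifs <;> omega, by omega⟩
  · exact ⟨2 * c.natAbs - 1, by unfold intByAbs; split_ifs <;> omega, by omega⟩

lemma measurable_sInf_setOf_mem {α : Type*} [MeasurableSpace α] {D : ℕ → Set α}
    (hD : ∀ m, MeasurableSet (D m)) : Measurable fun x => sInf {m | x ∈ D m} := by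
  classical
  have hex : ∀ x, ∃ m, x ∈ D m ∨ x ∉ ⋃ m, D m := fun x =>
    (em (x ∈ ⋃ m, D m)).elim (fun hx => (Set.mem_iUnion.mp hx).imp fun _ => .inl)
      fun hx => ⟨0, .inr hx⟩
  have heq : (fun x => sInf {m | x ∈ D m}) = fun x => Nat.find (hex x) := by
    funext x
    by_cases hx : x ∈ ⋃ m, D m
    · rw [Nat.sInf_def (s := {m | x ∈ D m}) (Set.mem_iUnion.mp hx)]
      exact Nat.find_congr' (by simp [hx])
    · have hempty : {m | x ∈ D m} = ∅ := by
        simpa [Set.eq_empty_iff_forall_notMem] using hx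
      rw [hempty, Nat.sInf_empty, eq_comm, Nat.find_eq_zero]
      exact .inr hx
  rw [heq]
  exact measurable_find hex fun m => (hD m).union (MeasurableSet.iUnion hD).compl

section OrbitCocycle

variable {α : Type*}

/-- The exponent `c` of least absolute value with `f x = (R ^ c) x`, and `0` if there is none. -/
def orbitCocycle (R : Equiv.Perm α) (f : α → α) (x : α) : ℤ :=
  intByAbs (sInf {m | f x = (R ^ intByAbs m) x})

lemma orbitCocycle_spec {R : Equiv.Perm α} {f : α → α} {x : α} {c : ℤ}
    (hc : f x = (R ^ c) x) :
    f x = (R ^ orbitCocycle R f x) x ∧ (orbitCocycle R f x).natAbs ≤ c.natAbs := by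
  obtain ⟨m, rfl, hm⟩ := exists_intByAbs_eq c
  have hmem : m ∈ {m | f x = (R ^ intByAbs m) x} := hc
  refine ⟨Nat.sInf_mem ⟨m, hmem⟩, ?_⟩
  have := Nat.sInf_le hmem
  rw [orbitCocycle, natAbs_intByAbs]
  omega

lemma measurableSet_eq_zpow_apply [MeasurableSpace α] [MeasurableEq α] {R : Equiv.Perm α}
    (hR : Measurable R) {f : α → α} (hf : Measurable f) (c : ℤ) :
    MeasurableSet {x | f x = (R ^ c) x} := by
  have hpow : ∀ k : ℕ, Measurable (R ^ k) := fun k => by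
    rw [Equiv.Perm.coe_pow]; exact hR.iterate k
  rcases c with k | k
  · simpa using measurableSet_eq_fun hf (hpow k)
  · have heq : {x | f x = (R ^ Int.negSucc k) x} = {x | (R ^ (k + 1)) (f x) = x} := by
      ext x
      simp only [Set.mem_ofPred_eq, zpow_negSucc, Equiv.Perm.eq_inv_iff_eq, eq_comm]
    rw [heq]
    exact measurableSet_eq_fun ((hpow (k + 1)).comp hf) measurable_id

lemma measurable_orbitCocycle [MeasurableSpace α] [MeasurableEq α] {R : Equiv.Perm α}
    (hR : Measurable R) {f : α → α} (hf : Measurable f) : Measurable (orbitCocycle R f) :=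
  measurable_from_top.comp (measurable_sInf_setOf_mem fun _ => measurableSet_eq_zpow_apply hR hf _)

end OrbitCocycle

lemma exists_zpow_apply_eq_of_step {α : Type*} {R : Equiv.Perm α} {C : Set α} {p : α → ℕ} {H : ℕ}
    (hinj : Set.InjOn p C) (hlt : ∀ z ∈ C, p z < H)
    (hstep : ∀ z ∈ C, p z + 1 < H → R z ∈ C ∧ p (R z) = p z + 1)
    {x y : α} (hx : x ∈ C) (hy : y ∈ C) : ∃ c : ℤ, y = (R ^ c) x ∧ c.natAbs < H := by
  have hiter : ∀ d : ℕ, ∀ z ∈ C, p z + d < H → (R ^ d) z ∈ C ∧ p ((R ^ d) z) = p z + d := by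
    intro d
    induction d with
    | zero => intro z hz _; exact ⟨hz, rfl⟩
    | succ d ih =>
      intro z hz hd
      obtain ⟨hdC, hdp⟩ := ih z hz (by omega)
      rw [pow_succ', Equiv.Perm.mul_apply, ← add_assoc, ← hdp]
      exact hstep _ hdC (by omega)
  have forward : ∀ z ∈ C, ∀ w ∈ C, p z ≤ p w → (R ^ (p w - p z)) z = w := fun z hz w hw hzw => by
    obtain ⟨hC, hp⟩ := hiter (p w - p z) z hz (by have := hlt w hw; omega)
    exact hinj hC hw (by omega)
  have hxH := hlt x hx
  have hyH := hlt y hy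
  rcases le_total (p x) (p y) with hxy | hyx
  · refine ⟨(p y - p x : ℕ), ?_, by omega⟩
    rw [zpow_natCast, forward x hx y hy hxy]
  · refine ⟨-(p x - p y : ℕ), ?_, by omega⟩
    rw [zpow_neg, zpow_natCast, Equiv.Perm.eq_inv_iff_eq, forward y hy x hx hyx]

section Digits

variable {q h : ℕ → ℕ}

def digitValue (h : ℕ → ℕ) (n : ℕ) (y : ∀ k, Fin (q k)) : ℕ :=
  ∑ k ∈ range n, (y k : ℕ) * h k

lemma height_pos (hq : ∀ n, 0 < q n) (h0 : h 0 = 1) (hrec : ∀ n, h (n + 1) = q n * h n)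
    (n : ℕ) : 0 < h n := by
  induction n with
  | zero => omega
  | succ n ih => rw [hrec]; exact Nat.mul_pos (hq n) ih

lemma sum_pred_mul_add_one (hq : ∀ n, 0 < q n) (h0 : h 0 = 1)
    (hrec : ∀ n, h (n + 1) = q n * h n) (n : ℕ) :
    ∑ k ∈ range n, (q k - 1) * h k + 1 = h n := by
  induction n with
  | zero => simp [h0]
  | succ n ih =>
    obtain ⟨r, hr⟩ := Nat.exists_eq_add_of_lt (hq n)
    rw [sum_range_succ, add_right_comm, ih, hrec, hr]
    simp only [zero_add, add_tsub_cancel_right]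
    ring

lemma digitValue_lt (hq : ∀ n, 0 < q n) (h0 : h 0 = 1) (hrec : ∀ n, h (n + 1) = q n * h n)
    (n : ℕ) (y : ∀ k, Fin (q k)) : digitValue h n y < h n := by
  rw [← sum_pred_mul_add_one hq h0 hrec n, Nat.lt_add_one_iff]
  exact sum_le_sum fun k _ => Nat.mul_le_mul_right _ (by have := (y k).isLt; omega)

lemma digitValue_add_one_lt_iff (hq : ∀ n, 0 < q n) (h0 : h 0 = 1)
    (hrec : ∀ n, h (n + 1) = q n * h n) {n : ℕ} {y : ∀ k, Fin (q k)} :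
    digitValue h n y + 1 < h n ↔ ∃ k < n, (y k : ℕ) ≠ q k - 1 := by
  rw [← sum_pred_mul_add_one hq h0 hrec n, add_lt_add_iff_right]
  constructor
  · intro hlt
    by_contra! hmax
    exact hlt.ne (sum_congr rfl fun k hk => by rw [hmax k (mem_range.mp hk)])
  · rintro ⟨k, hk, hne⟩
    refine sum_lt_sum (fun i _ => Nat.mul_le_mul_right _ (by have := (y i).isLt; omega))
      ⟨k, mem_range.mpr hk, Nat.mul_lt_mul_of_pos_right ?_ (height_pos hq h0 hrec k)⟩
    have := (y k).isLt
    omega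

lemma digitValue_succ (n : ℕ) (y : ∀ k, Fin (q k)) :
    digitValue h (n + 1) y = digitValue h n y + y n * h n :=
  sum_range_succ _ n

lemma eq_of_digitValue_eq (hq : ∀ n, 0 < q n) (h0 : h 0 = 1)
    (hrec : ∀ n, h (n + 1) = q n * h n) {n : ℕ} {a b : ∀ k, Fin (q k)}
    (hab : digitValue h n a = digitValue h n b) : ∀ k < n, a k = b k := by
  induction n with
  | zero => simp
  | succ n ih =>
    rw [digitValue_succ, digitValue_succ] at hab
    have hpos := height_pos hq h0 hrec n
    have ha := digitValue_lt hq h0 hrec n a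
    have hb := digitValue_lt hq h0 hrec n b
    have hlow : digitValue h n a = digitValue h n b := by
      have := congrArg (· % h n) hab
      simpa [Nat.add_mul_mod_self_right, Nat.mod_eq_of_lt ha, Nat.mod_eq_of_lt hb] using this
    have htop : (a n : ℕ) = b n := by
      have := congrArg (· / h n) hab
      simpa [Nat.add_mul_div_right _ _ hpos, Nat.div_eq_of_lt ha, Nat.div_eq_of_lt hb] using this
    intro k hk
    rcases Nat.lt_succ_iff_lt_or_eq.mp hk with hk | rfl
    · exact ih hlow k hk
    · exact Fin.ext htop

lemma digitValue_eq_add {n i : ℕ} (hi : i < n) (y : ∀ k, Fin (q k)) :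
    digitValue h n y = digitValue h i y + y i * h i + ∑ k ∈ Ico (i + 1) n, (y k : ℕ) * h k := by
  rw [digitValue, ← sum_range_add_sum_Ico _ hi.le, sum_eq_sum_Ico_succ_bot hi, digitValue,
    add_assoc]

end Digits

section Odomutant

variable {q h : ℕ → ℕ}

def IsOdometer (S : Equiv.Perm (∀ n, Fin (q n))) : Prop :=
  ∀ (x : ∀ n, Fin (q n)) (i : ℕ), (∀ j, j < i → (x j : ℕ) = q j - 1) → (x i : ℕ) ≠ q i - 1 →
    (∀ j, j < i → (S x j : ℕ) = 0) ∧ (S x i : ℕ) = (x i : ℕ) + 1 ∧ ∀ j, i < j → S x j = x j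

def IsOdomutant (hq : ∀ n, 2 ≤ q n) (σ : ∀ n, Fin (q (n + 1)) → Equiv.Perm (Fin (q n)))
    (S T : Equiv.Perm (∀ n, Fin (q n))) : Prop :=
  ∀ x, ∀ n, (∃ k ≤ n, psiInf q σ x k ≠ xMax q hq k) → psiN q σ n (T x) = S (psiN q σ n x)

lemma IsOdometer.digitValue_apply {S : Equiv.Perm (∀ n, Fin (q n))} (hS : IsOdometer S)
    (hq : ∀ n, 0 < q n) (h0 : h 0 = 1) (hrec : ∀ n, h (n + 1) = q n * h n) {n : ℕ}
    {x : ∀ k, Fin (q k)} (hx : ∃ k < n, (x k : ℕ) ≠ q k - 1) :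
    (∀ k, n ≤ k → S x k = x k) ∧ digitValue h n (S x) = digitValue h n x + 1 := by
  classical
  have hx' : ∃ k, (x k : ℕ) ≠ q k - 1 := hx.imp fun _ => And.right
  set i := Nat.find hx'
  have hin : i < n := by
    obtain ⟨k, hk, hne⟩ := hx
    exact (Nat.find_min' hx' hne).trans_lt hk
  obtain ⟨hzero, hsucc, htail⟩ :=
    hS x i (fun j hj => not_not.mp (Nat.find_min hx' hj)) (Nat.find_spec hx')
  refine ⟨fun k hk => htail k (by omega), ?_⟩
  have hlowS : digitValue h i (S x) = 0 :=
    sum_eq_zero fun k hk => by rw [hzero k (mem_range.mp hk), zero_mul]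
  have hlowx : digitValue h i x + 1 = h i := by
    rw [← sum_pred_mul_add_one hq h0 hrec i]
    congr 1
    exact sum_congr rfl fun k hk => by rw [Nat.find_min hx' (mem_range.mp hk) |> not_not.mp]
  have hhigh : ∑ k ∈ Ico (i + 1) n, (S x k : ℕ) * h k = ∑ k ∈ Ico (i + 1) n, (x k : ℕ) * h k :=
    sum_congr rfl fun k hk => by rw [htail k (mem_Ico.mp hk).1]
  rw [digitValue_eq_add hin, digitValue_eq_add hin, hlowS, hhigh, hsucc, ← hlowx]
  ring

lemma psiN_of_le {σ : ∀ n, Fin (q (n + 1)) → Equiv.Perm (Fin (q n))} {n k : ℕ} (hk : k ≤ n)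
    (y : ∀ k, Fin (q k)) : psiN q σ n y k = psiInf q σ y k :=
  if_pos hk

lemma psiN_of_lt {σ : ∀ n, Fin (q (n + 1)) → Equiv.Perm (Fin (q n))} {n k : ℕ} (hk : n < k)
    (y : ∀ k, Fin (q k)) : psiN q σ n y k = y k :=
  if_neg (by omega)

lemma eq_of_psiInf_eq {σ : ∀ n, Fin (q (n + 1)) → Equiv.Perm (Fin (q n))}
    {x y : ∀ k, Fin (q k)} {m : ℕ} (hm : x m = y m)
    (hψ : ∀ k < m, psiInf q σ x k = psiInf q σ y k) {k : ℕ} (hk : k ≤ m) : x k = y k := by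
  refine Nat.decreasingInduction (motive := fun k _ => x k = y k) (fun k hk ih => ?_) hm hk
  exact (σ k (y (k + 1))).injective (by simpa [psiInf, ih] using hψ k hk)

lemma IsOdomutant.digitValue_psiInf_apply {hq : ∀ n, 2 ≤ q n}
    {σ : ∀ n, Fin (q (n + 1)) → Equiv.Perm (Fin (q n))} {S T : Equiv.Perm (∀ n, Fin (q n))}
    (hT : IsOdomutant hq σ S T) (hS : IsOdometer S) (h0 : h 0 = 1)
    (hrec : ∀ n, h (n + 1) = q n * h n) {n : ℕ} {z : ∀ k, Fin (q k)}
    (hz : ∃ k ≤ n, psiInf q σ z k ≠ xMax q hq k) :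
    (∀ k, n < k → T z k = z k) ∧
      digitValue h (n + 1) (psiInf q σ (T z)) = digitValue h (n + 1) (psiInf q σ z) + 1 := by
  have hval : ∀ y, digitValue h (n + 1) (psiN q σ n y) = digitValue h (n + 1) (psiInf q σ y) :=
    fun y => sum_congr rfl fun k hk => by rw [psiN_of_le (Nat.lt_succ_iff.mp (mem_range.mp hk))]
  obtain ⟨k, hk, hne⟩ := hz
  obtain ⟨htail, hstep⟩ :=
    hS.digitValue_apply (h := h) (fun n => zero_lt_two.trans_le (hq n)) h0 hrec
    (x := psiN q σ n z) (n := n + 1)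
    ⟨k, Nat.lt_succ_of_le hk, by rw [psiN_of_le hk]; exact fun heq => hne (Fin.ext heq)⟩
  rw [← hT z n ⟨k, hk, hne⟩] at htail hstep
  refine ⟨fun j hj => ?_, by rw [← hval, hstep, hval]⟩
  simpa only [psiN_of_lt hj] using htail j hj

end Odomutant

section OrbitBounds

variable {q h : ℕ → ℕ} {hq : ∀ n, 2 ≤ q n} {σ : ∀ n, Fin (q (n + 1)) → Equiv.Perm (Fin (q n))}
  {S T : Equiv.Perm (∀ n, Fin (q n))}

lemma exists_zpow_odometer_eq_odomutant (hS : IsOdometer S) (hT : IsOdomutant hq σ S T)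
    (h0 : h 0 = 1) (hrec : ∀ n, h (n + 1) = q n * h n) {n : ℕ} {x : ∀ k, Fin (q k)}
    (hx : psiInf q σ x n ≠ xMax q hq n) : ∃ c : ℤ, T x = (S ^ c) x ∧ c.natAbs < h (n + 1) := by
  have hq0 : ∀ n, 0 < q n := fun n => zero_lt_two.trans_le (hq n)
  refine exists_zpow_apply_eq_of_step (C := {y | ∀ k, n < k → y k = x k})
    (p := digitValue h (n + 1)) (x := x) (y := T x) (fun a ha b hb hab => funext fun k => ?_)
    (fun z _ => digitValue_lt hq0 h0 hrec _ z) (fun z hz hlt => ?_) (fun _ _ => rfl)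
    (hT.digitValue_psiInf_apply hS h0 hrec ⟨n, le_rfl, hx⟩).1
  · rcases le_or_gt k n with hk | hk
    · exact eq_of_digitValue_eq hq0 h0 hrec hab k (Nat.lt_succ_of_le hk)
    · exact (ha k hk).trans (hb k hk).symm
  · obtain ⟨htail, hstep⟩ := hS.digitValue_apply hq0 h0 hrec
      ((digitValue_add_one_lt_iff hq0 h0 hrec).mp hlt)
    exact ⟨fun k hk => (htail k hk).trans (hz k hk), hstep⟩

lemma exists_zpow_odomutant_eq_odometer (hS : IsOdometer S) (hT : IsOdomutant hq σ S T)
    (h0 : h 0 = 1) (hrec : ∀ n, h (n + 1) = q n * h n) {n : ℕ} {x : ∀ k, Fin (q k)}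
    (hx : x n ≠ xMax q hq n) : ∃ c : ℤ, S x = (T ^ c) x ∧ c.natAbs < h (n + 1) := by
  have hq0 : ∀ n, 0 < q n := fun n => zero_lt_two.trans_le (hq n)
  refine exists_zpow_apply_eq_of_step (C := {y | ∀ k, n < k → y k = x k})
    (p := fun y => digitValue h (n + 1) (psiInf q σ y)) (x := x) (y := S x)
    (fun a ha b hb hab => funext fun k => ?_)
    (fun z _ => digitValue_lt hq0 h0 hrec _ _) (fun z hz hlt => ?_) (fun _ _ => rfl)
    (hS.digitValue_apply hq0 h0 hrec ⟨n, n.lt_add_one, fun heq => hx (Fin.ext heq)⟩).1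
  · rcases le_or_gt k (n + 1) with hk | hk
    · exact eq_of_psiInf_eq ((ha _ n.lt_add_one).trans (hb _ n.lt_add_one).symm)
        (eq_of_digitValue_eq hq0 h0 hrec hab) hk
    · exact (ha k (by omega)).trans (hb k (by omega)).symm
  · obtain ⟨k, hk, hne⟩ := (digitValue_add_one_lt_iff hq0 h0 hrec).mp hlt
    obtain ⟨htail, hstep⟩ := hT.digitValue_psiInf_apply hS h0 hrec
      ⟨k, Nat.lt_succ_iff.mp hk, fun heq => hne (congrArg Fin.val heq)⟩
    exact ⟨fun k hk => (htail k hk).trans (hz k hk), hstep⟩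

end OrbitBounds

lemma lintegral_le_tsum_mul_measure {α : Type*} [MeasurableSpace α] {μ : Measure α}
    {f : α → ENNReal} {G : ℕ → Set α} (hG : ∀ n, MeasurableSet (G n))
    (hcov : ∀ᵐ x ∂μ, ∃ n, x ∈ G n) {a : ℕ → ENNReal} (hf : ∀ n, ∀ x ∈ G n, f x ≤ a n) :
    ∫⁻ x, f x ∂μ ≤ ∑' n, a n * μ (G n) :=
  calc ∫⁻ x, f x ∂μ ≤ ∫⁻ x, ∑' n, (G n).indicator (fun _ => a n) x ∂μ := by
        refine lintegral_mono_ae (hcov.mono fun x ⟨n, hx⟩ => ?_)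
        exact (hf n x hx).trans (by simpa [hx] using ENNReal.le_tsum (f := fun n =>
          (G n).indicator (fun _ => a n) x) n)
    _ = ∑' n, a n * μ (G n) := by
        rw [lintegral_tsum fun n => (measurable_const.indicator (hG n)).aemeasurable]
        simp only [lintegral_indicator_const (hG _)]

lemma lintegral_ofReal_comp_abs_lt_top {α : Type*} [MeasurableSpace α] {μ : Measure α}
    {φ : ℝ → ℝ} (hφ0 : ∀ t, 0 ≤ t → 0 ≤ φ t) (hφ : MonotoneOn φ (Set.Ici 0))
    {c : α → ℤ} {G : ℕ → Set α} (hG : ∀ n, MeasurableSet (G n))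
    (hcov : ∀ᵐ x ∂μ, ∃ n, x ∈ G n) {b d : ℕ → ℕ} (hd : ∀ n, 0 < d n)
    (hμG : ∀ n, μ (G n) ≤ (d n : ENNReal)⁻¹) (hb : ∀ n, ∀ x ∈ G n, (c x).natAbs ≤ b n)
    (hsum : Summable fun n => φ (b n) / d n) :
    ∫⁻ x, ENNReal.ofReal (φ |(c x : ℝ)|) ∂μ < ⊤ :=
  calc ∫⁻ x, ENNReal.ofReal (φ |(c x : ℝ)|) ∂μ
      ≤ ∑' n, ENNReal.ofReal (φ (b n)) * μ (G n) := by
        refine lintegral_le_tsum_mul_measure hG hcov fun n x hx => ENNReal.ofReal_le_ofReal ?_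
        refine hφ (abs_nonneg (c x : ℝ)) (Nat.cast_nonneg (α := ℝ) (b n)) ?_
        rw [← Int.cast_abs, ← Int.natCast_natAbs, Int.cast_natCast]
        exact_mod_cast hb n x hx
    _ ≤ ∑' n, ENNReal.ofReal (φ (b n) / d n) := by
        refine ENNReal.tsum_le_tsum fun n => ?_
        rw [ENNReal.ofReal_div_of_pos (by exact_mod_cast hd n), ENNReal.ofReal_natCast,
          div_eq_mul_inv]
        gcongr
        exact hμG n
    _ = ENNReal.ofReal (∑' n, φ (b n) / d n) :=
        (ENNReal.ofReal_tsum_of_nonneg (fun n => div_nonneg (hφ0 _ (Nat.cast_nonneg _))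
          (Nat.cast_nonneg _)) hsum).symm
    _ < ⊤ := ENNReal.ofReal_lt_top

section Measure

variable {q h : ℕ → ℕ} {μ : Measure (∀ n, Fin (q n))}

def IsUniformProductMeasure (μ : Measure (∀ n, Fin (q n))) : Prop :=
  ∀ (n : ℕ) (y : ∀ i, Fin (q i)), μ {x | ∀ i < n, x i = y i} = 1 / ∏ i ∈ range n, (q i : ENNReal)

lemma self_lt_height (hq : ∀ n, 2 ≤ q n) (h0 : h 0 = 1) (hrec : ∀ n, h (n + 1) = q n * h n)
    (n : ℕ) : n < h n := by
  induction n with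
  | zero => omega
  | succ n ih => rw [hrec]; nlinarith [hq n]

lemma measure_le_inv_height (hμ : IsUniformProductMeasure μ)
    (hq : ∀ n, 0 < q n) (h0 : h 0 = 1) (hrec : ∀ n, h (n + 1) = q n * h n)
    {n : ℕ} {E : Set (∀ k, Fin (q k))}
    (hE : ∀ x ∈ E, ∀ y ∈ E, x n = y n → ∀ i ≤ n, x i = y i) : μ E ≤ (h n : ENNReal)⁻¹ := by
  have hprod : ∀ n, ∏ i ∈ range n, (q i : ENNReal) = h n := fun n => by
    induction n with
    | zero => simp [h0]
    | succ n ih => rw [prod_range_succ, ih, hrec, Nat.cast_mul, mul_comm]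
  have hq0 : (q n : ENNReal) ≠ 0 := by exact_mod_cast (hq n).ne'
  calc μ E ≤ μ (⋃ z : Fin (q n), E ∩ {x | x n = z}) :=
        measure_mono fun x hx => Set.mem_iUnion.mpr ⟨x n, hx, rfl⟩
    _ ≤ ∑ z : Fin (q n), μ (E ∩ {x | x n = z}) := measure_iUnion_fintype_le _ _
    _ ≤ ∑ _z : Fin (q n), (h (n + 1) : ENNReal)⁻¹ := by
        refine sum_le_sum fun z _ => ?_
        rcases (E ∩ {x | x n = z}).eq_empty_or_nonempty with hempty | ⟨w, hwE, hwz⟩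
        · simp [hempty]
        · calc μ (E ∩ {x | x n = z}) ≤ μ {x | ∀ i < n + 1, x i = w i} :=
                measure_mono fun x ⟨hxE, hxz⟩ i hi =>
                  hE x hxE w hwE (hxz.trans hwz.symm) i (Nat.lt_succ_iff.mp hi)
            _ = (h (n + 1) : ENNReal)⁻¹ := by rw [hμ, hprod, one_div]
    _ = (h n : ENNReal)⁻¹ := by
        rw [sum_const, card_univ, Fintype.card_fin, nsmul_eq_mul, hrec, Nat.cast_mul,
          ENNReal.mul_inv (.inl hq0) (.inl (ENNReal.natCast_ne_top _)), ← mul_assoc,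
          ENNReal.mul_inv_cancel hq0 (ENNReal.natCast_ne_top _), one_mul]

lemma measure_psiInf_eq_xMax_le (hμ : IsUniformProductMeasure μ)
    (hq : ∀ n, 2 ≤ q n) (h0 : h 0 = 1) (hrec : ∀ n, h (n + 1) = q n * h n)
    (σ : ∀ n, Fin (q (n + 1)) → Equiv.Perm (Fin (q n))) (n : ℕ) :
    μ {x | ∀ k < n, psiInf q σ x k = xMax q hq k} ≤ (h n : ENNReal)⁻¹ :=
  measure_le_inv_height hμ (fun n => zero_lt_two.trans_le (hq n)) h0 hrec
    fun _ hx _ hy hxy _ hi => eq_of_psiInf_eq hxy (fun k hk => (hx k hk).trans (hy k hk).symm) hi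

def levelSet (hq : ∀ n, 2 ≤ q n) (σ : ∀ n, Fin (q (n + 1)) → Equiv.Perm (Fin (q n))) (n : ℕ) :
    Set (∀ k, Fin (q k)) :=
  {x | (∀ k < n, psiInf q σ x k = xMax q hq k) ∧ psiInf q σ x n ≠ xMax q hq n}

lemma measurableSet_levelSet (hq : ∀ n, 2 ≤ q n)
    (σ : ∀ n, Fin (q (n + 1)) → Equiv.Perm (Fin (q n))) (n : ℕ) :
    MeasurableSet (levelSet hq σ n) := by
  have hψ : Measurable (psiInf q σ) := measurable_pi_lambda _ fun k =>
    (measurable_of_countable fun p : Fin (q (k + 1)) × Fin (q k) => σ k p.1 p.2).comp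
      (f := fun x : (∀ k, Fin (q k)) => (x (k + 1), x k)) (by fun_prop)
  exact hψ (by measurability : MeasurableSet
    {y : ∀ k, Fin (q k) | (∀ k < n, y k = xMax q hq k) ∧ y n ≠ xMax q hq n})

lemma ae_exists_mem_levelSet (hμ : IsUniformProductMeasure μ)
    (hq : ∀ n, 2 ≤ q n) (h0 : h 0 = 1) (hrec : ∀ n, h (n + 1) = q n * h n)
    (σ : ∀ n, Fin (q (n + 1)) → Equiv.Perm (Fin (q n))) :
    ∀ᵐ x ∂μ, ∃ n, x ∈ levelSet hq σ n := by
  have hnull : μ {x | ∀ n, psiInf q σ x n = xMax q hq n} = 0 := by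
    by_contra hne
    obtain ⟨n, hn⟩ := ENNReal.exists_inv_nat_lt hne
    have hle : μ {x | ∀ n, psiInf q σ x n = xMax q hq n} ≤ (h n : ENNReal)⁻¹ :=
      le_trans (measure_mono fun _ hx k (_ : k < n) => hx k)
        (measure_psiInf_eq_xMax_le hμ hq h0 hrec σ n)
    have hinv : (h n : ENNReal)⁻¹ ≤ (n : ENNReal)⁻¹ :=
      ENNReal.inv_le_inv.mpr (by exact_mod_cast (self_lt_height hq h0 hrec n).le)
    exact (hn.trans_le (hle.trans hinv)).false
  have hae : ∀ᵐ x ∂μ, ∃ n, psiInf q σ x n ≠ xMax q hq n := by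
    rw [ae_iff]
    push Not
    exact hnull
  filter_upwards [hae] with x hx
  exact ⟨Nat.find hx, fun k hk => not_not.mp (Nat.find_min hx hk), Nat.find_spec hx⟩

end Measure

lemma orbitCocycle_ae_eq_and_lintegral_lt_top {q h : ℕ → ℕ} {μ : Measure (∀ n, Fin (q n))}
    (hμ : IsUniformProductMeasure μ)
    (hq : ∀ n, 2 ≤ q n) (h0 : h 0 = 1) (hrec : ∀ n, h (n + 1) = q n * h n)
    {φ : ℝ → ℝ} (hφ0 : ∀ t, 0 ≤ t → 0 ≤ φ t) (hφ : MonotoneOn φ (Set.Ici 0))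
    (hsum : Summable fun n => φ (h (n + 1)) / (h n : ℝ))
    (σ : ∀ n, Fin (q (n + 1)) → Equiv.Perm (Fin (q n))) {R : Equiv.Perm (∀ n, Fin (q n))}
    {f : (∀ n, Fin (q n)) → ∀ n, Fin (q n)}
    (hf : ∀ n, ∀ x ∈ levelSet hq σ n, ∃ c : ℤ, f x = (R ^ c) x ∧ c.natAbs < h (n + 1)) :
    (∀ᵐ x ∂μ, f x = (R ^ orbitCocycle R f x) x) ∧
      ∫⁻ x, ENNReal.ofReal (φ |(orbitCocycle R f x : ℝ)|) ∂μ < ⊤ := by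
  have hq0 : ∀ n, 0 < q n := fun n => zero_lt_two.trans_le (hq n)
  have hcov := ae_exists_mem_levelSet hμ hq h0 hrec σ
  refine ⟨hcov.mono fun x ⟨n, hx⟩ => ?_, lintegral_ofReal_comp_abs_lt_top hφ0 hφ
    (measurableSet_levelSet hq σ) hcov (height_pos hq0 h0 hrec)
    (fun n => (measure_mono fun _ hx => hx.1).trans (measure_psiInf_eq_xMax_le hμ hq h0 hrec σ n))
    (fun n x hx => ?_) hsum⟩
  · obtain ⟨c, hc, -⟩ := hf n x hx
    exact (orbitCocycle_spec hc).1
  · obtain ⟨c, hc, hcb⟩ := hf n x hx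
    exact (orbitCocycle_spec hc).2.trans hcb.le

theorem stmt17_general (q : ℕ → ℕ) (hq : ∀ n, 2 ≤ q n)
    (μ : Measure (∀ n, Fin (q n)))
    (hμ : ∀ (n : ℕ) (y : ∀ i, Fin (q i)),
      μ {x | ∀ i < n, x i = y i} = 1 / ∏ i ∈ Finset.range n, (q i : ENNReal))
    (σ : ∀ n, Fin (q (n + 1)) → Equiv.Perm (Fin (q n)))
    (S : Equiv.Perm (∀ n, Fin (q n)))
    (hS : ∀ (x : ∀ n, Fin (q n)) (i : ℕ),
      (∀ j, j < i → (x j : ℕ) = q j - 1) → (x i : ℕ) ≠ q i - 1 →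
        (∀ j, j < i → (S x j : ℕ) = 0) ∧ (S x i : ℕ) = (x i : ℕ) + 1 ∧
          ∀ j, i < j → S x j = x j)
    (hSpres : MeasurePreserving (⇑S) μ μ)
    (T : Equiv.Perm (∀ n, Fin (q n)))
    (hTm : Measurable T)
    -- T is the odomutant associated to S and the permutations σ
    (hT : ∀ x, ∀ n, (∃ k ≤ n, psiInf q σ x k ≠ xMax q hq k) →
      psiN q σ n (T x) = S (psiN q σ n x))
    (h : ℕ → ℕ) (h0 : h 0 = 1) (hrec : ∀ n, h (n + 1) = q n * h n)
    (φ : ℝ → ℝ) (hφ0 : ∀ t, 0 ≤ t → 0 ≤ φ t) (hφmono : MonotoneOn φ (Set.Ici (0 : ℝ)))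
    (hsum : Summable (fun n => φ (h (n + 1)) / (h n : ℝ))) :
    ∃ cS cT : (∀ n, Fin (q n)) → ℤ,
      Measurable cS ∧ Measurable cT ∧
      (∀ᵐ x ∂μ, S x = (T ^ cS x) x) ∧ (∀ᵐ x ∂μ, T x = (S ^ cT x) x) ∧
      ∫⁻ x, ENNReal.ofReal (φ |(cS x : ℝ)|) ∂μ < ⊤ ∧
      ∫⁻ x, ENNReal.ofReal (φ |(cT x : ℝ)|) ∂μ < ⊤ := by
  -- the level sets of the trivial distortion `σ = 1` are those of the odometer itself
  obtain ⟨hSae, hSint⟩ := orbitCocycle_ae_eq_and_lintegral_lt_top hμ hq h0 hrec hφ0 hφmono hsum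
    (fun _ _ => 1) (R := T) (f := S) fun _ _ hx =>
      exists_zpow_odomutant_eq_odometer (σ := σ) hS hT h0 hrec hx.2
  obtain ⟨hTae, hTint⟩ := orbitCocycle_ae_eq_and_lintegral_lt_top hμ hq h0 hrec hφ0 hφmono hsum
    σ (R := S) (f := T) fun _ _ hx => exists_zpow_odometer_eq_odomutant hS hT h0 hrec hx.2
  exact ⟨_, _, measurable_orbitCocycle hTm hSpres.measurable,
    measurable_orbitCocycle hSpres.measurable hTm, hSae, hTae, hSint, hTint⟩

/-- If `∑ φ(h_{n+1})/h_n < ∞` with `φ` non-decreasing, the identity is a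
`φ`-integrable orbit equivalence between the odometer `S` and the odomutant `T`. -/
theorem stmt17 (q : ℕ → ℕ) (hq : ∀ n, 2 ≤ q n)
    (μ : Measure (∀ n, Fin (q n))) [IsProbabilityMeasure μ]
    (hμ : ∀ (n : ℕ) (y : ∀ i, Fin (q i)),
      μ {x | ∀ i < n, x i = y i} = 1 / ∏ i ∈ Finset.range n, (q i : ENNReal))
    (σ : ∀ n, Fin (q (n + 1)) → Equiv.Perm (Fin (q n)))
    (S : Equiv.Perm (∀ n, Fin (q n)))
    (hS : ∀ (x : ∀ n, Fin (q n)) (i : ℕ),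
      (∀ j, j < i → (x j : ℕ) = q j - 1) → (x i : ℕ) ≠ q i - 1 →
        (∀ j, j < i → (S x j : ℕ) = 0) ∧ (S x i : ℕ) = (x i : ℕ) + 1 ∧
          ∀ j, i < j → S x j = x j)
    (hS' : ∀ (x : ∀ n, Fin (q n)), (∀ j, (x j : ℕ) = q j - 1) → ∀ j, (S x j : ℕ) = 0)
    (hSpres : MeasurePreserving (⇑S) μ μ)
    (T : Equiv.Perm (∀ n, Fin (q n)))
    (hTm : Measurable T) (hTm' : Measurable T.symm)
    (hTpres : MeasurePreserving (⇑T) μ μ)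
    -- T is the odomutant associated to S and the permutations σ
    (hT : ∀ x, ∀ n, (∃ k ≤ n, psiInf q σ x k ≠ xMax q hq k) →
      psiN q σ n (T x) = S (psiN q σ n x))
    (h : ℕ → ℕ) (h0 : h 0 = 1) (hrec : ∀ n, h (n + 1) = q n * h n)
    (φ : ℝ → ℝ) (hφ0 : ∀ t, 0 ≤ t → 0 ≤ φ t) (hφmono : MonotoneOn φ (Set.Ici (0 : ℝ)))
    (hsum : Summable (fun n => φ (h (n + 1)) / (h n : ℝ))) :
    ∃ cS cT : (∀ n, Fin (q n)) → ℤ,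
      Measurable cS ∧ Measurable cT ∧
      (∀ᵐ x ∂μ, S x = (T ^ cS x) x) ∧ (∀ᵐ x ∂μ, T x = (S ^ cT x) x) ∧
      ∫⁻ x, ENNReal.ofReal (φ |(cS x : ℝ)|) ∂μ < ⊤ ∧
      ∫⁻ x, ENNReal.ofReal (φ |(cT x : ℝ)|) ∂μ < ⊤ :=
  stmt17_general q hq μ hμ σ S hS hSpres T hTm hT h h0 hrec φ hφ0 hφmono hsum

end
end
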